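/- arXiv:2601.13474 — 7 statements merged into one kernel-verified Lean document; each statement's English description precedes it below -/
import Mathlib

section
/- Consider the scalar recursion θ_{t+1} = θ_t - η_t · sign(λ*·θ_t - 1), where λ* ≥ λ*_min > 0, η_t = (C/λ*_min)·ρ^t with C ≥ 1 and ρ ∈ [1/2, 1), and θ_0 = 0. Then for all t ≥ 0, |θ_{t+1} - 1/λ*| ≤ η_t = (C/λ*_min)·ρ^t. -/
/-- Spectral-domain decoupled Muon dynamics for the ICL quadratic:
`θ_{t+1} = θ_t - η_t·sign(λ*·θ_t - 1)` with `θ_0 = 0` converges linearly: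
`|θ_{t+1} - 1/λ*| ≤ η_t = (C/λmin)·ρ^t`. -/
theorem stmt4 (θ η : ℕ → ℝ) (lam lamMin C ρ : ℝ)
    (hlam : lamMin ≤ lam) (hlamMin : 0 < lamMin)
    (hC : 1 ≤ C) (hρ1 : 1 / 2 ≤ ρ) (hρ2 : ρ < 1)
    (hη : ∀ t, η t = C / lamMin * ρ ^ t)
    (hrec : ∀ t, θ (t + 1) = θ t - η t * Real.sign (lam * θ t - 1))
    (h0 : θ 0 = 0) :
    ∀ t, |θ (t + 1) - 1 / lam| ≤ C / lamMin * ρ ^ t := by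
  have hlam0 : 0 < lam := lt_of_lt_of_le hlamMin hlam
  have hρ0 : (0:ℝ) < ρ := lt_of_lt_of_le (by norm_num) hρ1
  have hKpos : (0:ℝ) < C / lamMin := by positivity
  intro t
  induction t with
  | zero =>
    have hs : Real.sign (lam * θ 0 - 1) = -1 := by
      apply Real.sign_of_neg; rw [h0]; linarith
    have h1 : θ 1 = C / lamMin := by
      rw [hrec 0, hs, h0, hη 0]; ring
    rw [h1, abs_le]
    have h1l : 0 < 1 / lam := by positivity
    have h1u : 1 / lam ≤ C / lamMin := by
      rw [div_le_div_iff₀ hlam0 hlamMin]; nlinarith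
    simp only [pow_zero, mul_one]
    constructor <;> linarith
  | succ t ih =>
    rw [abs_le] at ih
    obtain ⟨ihl, ihu⟩ := ih
    have hpt : (0:ℝ) < ρ ^ t := by positivity
    have hpt1 : (0:ℝ) < C / lamMin * ρ ^ (t+1) := by positivity
    have key : C / lamMin * ρ ^ t ≤ 2 * (C / lamMin * ρ ^ (t+1)) := by
      rw [pow_succ]; nlinarith [mul_pos hKpos hpt]
    have hfac : lam * θ (t+1) - 1 = lam * (θ (t+1) - 1/lam) := by
      field_simp
    rcases lt_trichotomy (θ (t+1) - 1/lam) 0 with h | h | h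
    · have hs : Real.sign (lam * θ (t+1) - 1) = -1 := by
        apply Real.sign_of_neg
        rw [hfac]; exact mul_neg_of_pos_of_neg hlam0 h
      rw [hrec (t+1), hs, hη (t+1), abs_le]
      constructor <;> linarith
    · have hs : Real.sign (lam * θ (t+1) - 1) = 0 := by
        rw [hfac, h, mul_zero, Real.sign_zero]
      rw [hrec (t+1), hs, hη (t+1), abs_le]
      constructor <;> linarith
    · have hs : Real.sign (lam * θ (t+1) - 1) = 1 := by
        apply Real.sign_of_pos
        rw [hfac]; exact mul_pos hlam0 h
      rw [hrec (t+1), hs, hη (t+1), abs_le]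
      constructor <;> linarith
end

section
/- Consider the scalar recursion u_{t+1} = u_t - η_t·sign((u_t² - λ*)u_t) with 0 ≤ λ* ≤ λ*_max, learning rates η_t = C_t·√(λ*_max)·ρ^t where 1 ≤ C_t ≤ 2 for all t and 2/3 ≤ ρ < 1, and 0 < |u_0| ≤ η_0. Assume u_t ≠ 0 for all t. Then for all t ≥ 0, | |u_t| - √(λ*) | ≤ (2/(1-ρ))·√(λ*_max)·ρ^t. -/
lemma step_aux5 (a r η : ℝ) (ha : r < a) (hr : 0 ≤ r) (hη : 0 < η) :
    |(|a - η|) - r| ≤ max (a - r - η) η := by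
  rcases le_total r (|a - η|) with h1 | h1
  · rw [abs_of_nonneg (by linarith : (0:ℝ) ≤ |a - η| - r)]
    rcases le_total η a with h2 | h2
    · rw [abs_of_nonneg (by linarith : (0:ℝ) ≤ a - η)]
      exact le_max_of_le_left (by linarith)
    · rw [abs_of_nonpos (by linarith : a - η ≤ 0)]
      exact le_max_of_le_right (by linarith)
  · rw [abs_of_nonpos (by linarith : |a - η| - r ≤ 0)]
    rcases le_total η a with h2 | h2
    · rw [abs_of_nonneg (by linarith : (0:ℝ) ≤ a - η)] at h1 ⊢
      exact le_max_of_le_right (by linarith)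
    · rw [abs_of_nonpos (by linarith : a - η ≤ 0)] at h1 ⊢
      exact le_max_of_le_right (by linarith)

lemma step_lem5 (lam r η u1 u2 : ℝ) (hr : r = Real.sqrt lam) (hlam0 : 0 ≤ lam)
    (hη : 0 < η) (hu1 : u1 ≠ 0)
    (h2 : u2 = u1 - η * Real.sign ((u1 ^ 2 - lam) * u1)) :
    |(|u2|) - r| ≤ max (|(|u1|) - r| - η) η := by
  have hr0 : 0 ≤ r := hr ▸ Real.sqrt_nonneg _
  have hr2 : r ^ 2 = lam := by rw [hr]; exact Real.sq_sqrt hlam0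
  rcases lt_trichotomy (u1 ^ 2) lam with h | h | h
  · have ha : |u1| < r := by nlinarith [sq_abs u1, abs_nonneg u1]
    have h2' : |u2| = |u1| + η := by
      rcases hu1.lt_or_gt with hneg | hpos
      · have hs : Real.sign ((u1 ^ 2 - lam) * u1) = 1 :=
          Real.sign_of_pos (mul_pos_of_neg_of_neg (by linarith) hneg)
        rw [h2, hs, mul_one, abs_of_neg hneg,
          abs_of_neg (show u1 - η < 0 by linarith)]; ring
      · have hs : Real.sign ((u1 ^ 2 - lam) * u1) = -1 :=
          Real.sign_of_neg (mul_neg_of_neg_of_pos (by linarith) hpos)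
        rw [h2, hs, mul_neg_one, sub_neg_eq_add, abs_of_pos hpos,
          abs_of_pos (show (0:ℝ) < u1 + η by linarith)]
    rw [h2', abs_of_nonpos (by linarith : |u1| - r ≤ 0)]
    rcases le_total (|u1| + η) r with hc | hc
    · rw [abs_of_nonpos (by linarith : |u1| + η - r ≤ 0)]
      exact le_max_of_le_left (by linarith)
    · rw [abs_of_nonneg (by linarith : (0:ℝ) ≤ |u1| + η - r)]
      exact le_max_of_le_right (by linarith)
  · have hs : Real.sign ((u1 ^ 2 - lam) * u1) = 0 := by
      rw [show (u1 ^ 2 - lam) * u1 = 0 by rw [h]; ring, Real.sign_zero]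
    have hu : |u1| = r := by nlinarith [sq_abs u1, abs_nonneg u1]
    rw [h2, hs, mul_zero, sub_zero, hu, sub_self, abs_zero]
    exact le_max_of_le_right hη.le
  · have ha : r < |u1| := by nlinarith [sq_abs u1, abs_nonneg u1]
    have h2' : |u2| = |(|u1| - η)| := by
      rcases hu1.lt_or_gt with hneg | hpos
      · have hs : Real.sign ((u1 ^ 2 - lam) * u1) = -1 :=
          Real.sign_of_neg (mul_neg_of_pos_of_neg (by linarith) hneg)
        rw [h2, hs, mul_neg_one, sub_neg_eq_add, abs_of_neg hneg,
          show u1 + η = -(-u1 - η) by ring, abs_neg]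
      · have hs : Real.sign ((u1 ^ 2 - lam) * u1) = 1 :=
          Real.sign_of_pos (mul_pos (by linarith) hpos)
        rw [h2, hs, mul_one, abs_of_pos hpos]
    rw [h2', abs_of_nonneg (by linarith : (0:ℝ) ≤ |u1| - r)]
    exact step_aux5 _ _ _ ha hr0 hη

/-- One-dimensional Muon with time-varying learning-rate prefactors `C_t ∈ [1,2]` and
`ρ ∈ [2/3,1)`: the distance satisfies `||u_t| - √λ*| ≤ (2/(1-ρ))·√λmax·ρ^t`. -/
theorem stmt5 (u η : ℕ → ℝ) (C : ℕ → ℝ) (lam lamMax ρ : ℝ)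
    (hlam0 : 0 ≤ lam) (hlam : lam ≤ lamMax)
    (hC : ∀ t, 1 ≤ C t ∧ C t ≤ 2) (hρ1 : 2 / 3 ≤ ρ) (hρ2 : ρ < 1)
    (hη : ∀ t, η t = C t * Real.sqrt lamMax * ρ ^ t)
    (hrec : ∀ t, u (t + 1) = u t - η t * Real.sign ((u t ^ 2 - lam) * u t))
    (hu0pos : 0 < |u 0|) (hu0 : |u 0| ≤ η 0)
    (hne : ∀ t, u t ≠ 0) :
    ∀ t, |(|u t|) - Real.sqrt lam| ≤ 2 / (1 - ρ) * Real.sqrt lamMax * ρ ^ t := by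
  have hρ0 : (0:ℝ) < ρ := by linarith
  set L := Real.sqrt lamMax with hLdef
  set r := Real.sqrt lam with hrdef
  have hL0 : 0 ≤ L := Real.sqrt_nonneg _
  have hrL : r ≤ L := Real.sqrt_le_sqrt hlam
  have hr0 : 0 ≤ r := Real.sqrt_nonneg _
  rcases hL0.eq_or_lt with hL | hLpos
  · exfalso
    have hzero : η 0 = 0 := by rw [hη 0, ← hL]; ring
    rw [hzero] at hu0; linarith
  have hηlb : ∀ t, L * ρ ^ t ≤ η t := by
    intro t; rw [hη t]
    nlinarith [pow_pos hρ0 t, (hC t).1, mul_pos hLpos (pow_pos hρ0 t)]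
  have hηub : ∀ t, η t ≤ 2 * L * ρ ^ t := by
    intro t; rw [hη t]
    nlinarith [pow_pos hρ0 t, (hC t).2, mul_pos hLpos (pow_pos hρ0 t)]
  have hηpos : ∀ t, 0 < η t := fun t =>
    lt_of_lt_of_le (mul_pos hLpos (pow_pos hρ0 t)) (hηlb t)
  have hgeo : Summable (fun n : ℕ => ρ ^ n) :=
    summable_geometric_of_lt_one hρ0.le hρ2
  have hsum : Summable η :=
    Summable.of_nonneg_of_le (fun t => (hηpos t).le) hηub (hgeo.mul_left (2 * L))
  set S : ℕ → ℝ := fun t => ∑' s, η (s + t) with hSdef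
  have hsumt : ∀ t, Summable (fun s => η (s + t)) :=
    fun t => (summable_nat_add_iff t).2 hsum
  have hSrec : ∀ t, S t = η t + S (t + 1) := by
    intro t
    have h1 := Summable.tsum_eq_zero_add (hsumt t)
    have h2 : (fun s => η (s + 1 + t)) = fun s => η (s + (t + 1)) := by
      funext s; congr 1; omega
    simp only [hSdef, zero_add] at h1 ⊢
    rw [h1, h2]
  have hsumgeo : ∀ t, Summable (fun s : ℕ => L * ρ ^ t * ρ ^ s) :=
    fun t => hgeo.mul_left _
  have hsumgeo2 : ∀ t, Summable (fun s : ℕ => 2 * L * ρ ^ t * ρ ^ s) :=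
    fun t => hgeo.mul_left _
  have htsumgeo : (∑' s : ℕ, ρ ^ s) = (1 - ρ)⁻¹ :=
    tsum_geometric_of_lt_one hρ0.le hρ2
  have hSub : ∀ t, S t ≤ 2 * L * ρ ^ t / (1 - ρ) := by
    intro t
    have h1 : S t ≤ ∑' s : ℕ, 2 * L * ρ ^ t * ρ ^ s := by
      apply Summable.tsum_le_tsum _ (hsumt t) (hsumgeo2 t)
      intro s
      calc η (s + t) ≤ 2 * L * ρ ^ (s + t) := hηub (s + t)
        _ = 2 * L * ρ ^ t * ρ ^ s := by rw [pow_add]; ring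
    rw [tsum_mul_left, htsumgeo] at h1
    rw [div_eq_mul_inv]; exact h1
  have hSlb : ∀ t, L * ρ ^ t / (1 - ρ) ≤ S t := by
    intro t
    have h1 : (∑' s : ℕ, L * ρ ^ t * ρ ^ s) ≤ S t := by
      apply Summable.tsum_le_tsum _ (hsumgeo t) (hsumt t)
      intro s
      calc L * ρ ^ t * ρ ^ s = L * ρ ^ (s + t) := by rw [pow_add]; ring
        _ ≤ η (s + t) := hηlb (s + t)
    rw [tsum_mul_left, htsumgeo] at h1
    rw [div_eq_mul_inv]; exact h1
  have hηS : ∀ t, η t ≤ S (t + 1) := by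
    intro t
    have h1 : η t ≤ L * ρ ^ (t + 1) / (1 - ρ) := by
      rw [le_div_iff₀ (by linarith : (0:ℝ) < 1 - ρ), pow_succ]
      have := hηub t
      nlinarith [mul_pos hLpos (pow_pos hρ0 t)]
    exact h1.trans (hSlb (t + 1))
  have key : ∀ t, |(|u t|) - r| ≤ S t := by
    intro t
    induction t with
    | zero =>
      have hη0 : r ≤ η 0 := by
        calc r ≤ L := hrL
          _ = L * ρ ^ 0 := by ring
          _ ≤ η 0 := hηlb 0
      have h1 : |(|u 0|) - r| ≤ η 0 := by
        rcases abs_cases ((|u 0|) - r) with ⟨he, _⟩ | ⟨he, _⟩ <;> rw [he] <;> linarith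
      have h2 := hSrec 0
      have h3 : 0 ≤ S 1 := tsum_nonneg (fun s => (hηpos (s + 1)).le)
      linarith
    | succ t ih =>
      have hstep := step_lem5 lam r (η t) (u t) (u (t + 1)) hrdef hlam0
        (hηpos t) (hne t) (hrec t)
      have h1 : |(|u t|) - r| - η t ≤ S (t + 1) := by
        have := hSrec t; linarith
      calc |(|u (t + 1)|) - r| ≤ max (|(|u t|) - r| - η t) (η t) := hstep
        _ ≤ S (t + 1) := max_le h1 (hηS t)
  intro t
  have h1 := (key t).trans (hSub t)
  have h2 : 2 * L * ρ ^ t / (1 - ρ) = 2 / (1 - ρ) * L * ρ ^ t := by ring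
  linarith [h2 ▸ h1]
end

section
/- Consider the scalar recursion u_{t+1} = u_t - η_t·sign((u_t² - λ*)u_t) with 0 ≤ λ* ≤ λ*_max, learning rates η_t = C_t·√(λ*_max)·ρ^t where 1 ≤ C_t ≤ 2 and 2/3 ≤ ρ < 1, and 0 < |u_0| ≤ η_0. Assume u_t ≠ 0 for all t. Then for all t ≥ 0, |u_t² - λ*| ≤ (4/(1-ρ)² + 4/(1-ρ))·λ*_max·ρ^t. -/
private lemma aux_lt_of_sq_lt (a s : ℝ) (ha : 0 ≤ a) (hs : 0 ≤ s) (h : a ^ 2 < s ^ 2) :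
    a < s := by nlinarith

private lemma aux_step_below (a s sm M ρ q e : ℝ) (hs0 : 0 ≤ s) (hsm0 : 0 ≤ sm)
    (hssm : s ≤ sm) (hρ1 : 2 / 3 ≤ ρ) (hρ2 : ρ < 1) (hq : 0 < q)
    (hM : ρ * M = 2 * sm) (hM0 : 0 ≤ M)
    (he1 : sm * q ≤ e) (he2 : e ≤ 2 * sm * q) (ha : a < s)
    (ih1 : -(M * q) ≤ a - s) : |a + e - s| ≤ M * (q * ρ) := by
  have hM3 : M ≤ 3 * sm := by nlinarith
  have h2 : M * (q * ρ) = 2 * (sm * q) := by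
    rw [show M * (q * ρ) = (ρ * M) * q by ring, hM]; ring
  have h3 : M * q ≤ 3 * (sm * q) := by nlinarith [mul_nonneg (sub_nonneg.mpr hM3) hq.le]
  rw [abs_le]
  constructor <;> linarith

private lemma aux_step_above (a s sm M ρ q e : ℝ) (hs0 : 0 ≤ s) (hsm0 : 0 ≤ sm)
    (hssm : s ≤ sm) (hρ1 : 2 / 3 ≤ ρ) (hρ2 : ρ < 1) (hq : 0 < q)
    (hM : ρ * M = 2 * sm) (hM0 : 0 ≤ M)
    (he1 : sm * q ≤ e) (he2 : e ≤ 2 * sm * q) (ha : s < a)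
    (ih2 : a - s ≤ M * q) : |(|a - e|) - s| ≤ M * (q * ρ) := by
  have hM3 : M ≤ 3 * sm := by nlinarith
  have h2 : M * (q * ρ) = 2 * (sm * q) := by
    rw [show M * (q * ρ) = (ρ * M) * q by ring, hM]; ring
  have h3 : M * q ≤ 3 * (sm * q) := by nlinarith [mul_nonneg (sub_nonneg.mpr hM3) hq.le]
  rcases le_or_gt e a with hc | hc
  · have hae : |a - e| = a - e := abs_of_nonneg (by linarith)
    rw [hae, abs_le]
    constructor <;> linarith
  · have hae : |a - e| = -(a - e) := abs_of_neg (by linarith)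
    rw [hae, abs_le]
    constructor <;> linarith

/-- One-dimensional Muon with time-varying prefactors: the squared-spectral error satisfies
`|u_t² - λ*| ≤ (4/(1-ρ)² + 4/(1-ρ))·λmax·ρ^t`. -/
theorem stmt6 (u η : ℕ → ℝ) (C : ℕ → ℝ) (lam lamMax ρ : ℝ)
    (hlam0 : 0 ≤ lam) (hlam : lam ≤ lamMax)
    (hC : ∀ t, 1 ≤ C t ∧ C t ≤ 2) (hρ1 : 2 / 3 ≤ ρ) (hρ2 : ρ < 1)
    (hη : ∀ t, η t = C t * Real.sqrt lamMax * ρ ^ t)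
    (hrec : ∀ t, u (t + 1) = u t - η t * Real.sign ((u t ^ 2 - lam) * u t))
    (hu0pos : 0 < |u 0|) (hu0 : |u 0| ≤ η 0)
    (hne : ∀ t, u t ≠ 0) :
    ∀ t, |u t ^ 2 - lam| ≤ (4 / (1 - ρ) ^ 2 + 4 / (1 - ρ)) * lamMax * ρ ^ t := by
  have hρ0 : (0:ℝ) < ρ := by linarith
  have hρ' : (0:ℝ) < 1 - ρ := by linarith
  set s := Real.sqrt lam with hsdef
  set sm := Real.sqrt lamMax with hsmdef
  have hs0 : 0 ≤ s := Real.sqrt_nonneg _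
  have hsm0 : 0 ≤ sm := Real.sqrt_nonneg _
  have hssm : s ≤ sm := Real.sqrt_le_sqrt hlam
  have hs2 : s ^ 2 = lam := Real.sq_sqrt hlam0
  have hsm2 : sm ^ 2 = lamMax := Real.sq_sqrt (le_trans hlam0 hlam)
  obtain ⟨M, hMdef⟩ : ∃ M : ℝ, M = 2 * sm / ρ := ⟨_, rfl⟩
  have hM : ρ * M = 2 * sm := by rw [hMdef]; field_simp
  have hM0 : 0 ≤ M := by rw [hMdef]; exact div_nonneg (by linarith) hρ0.le
  have hη1 : ∀ t, sm * ρ ^ t ≤ η t := by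
    intro t
    rw [hη t]
    have h1 := (hC t).1
    have hpt : (0:ℝ) < ρ ^ t := pow_pos hρ0 t
    nlinarith [mul_nonneg (mul_nonneg (sub_nonneg.mpr h1) hsm0) hpt.le]
  have hη2 : ∀ t, η t ≤ 2 * sm * ρ ^ t := by
    intro t
    rw [hη t]
    have h2 := (hC t).2
    have hpt : (0:ℝ) < ρ ^ t := pow_pos hρ0 t
    nlinarith [mul_nonneg (mul_nonneg (sub_nonneg.mpr h2) hsm0) hpt.le]
  have key : ∀ t, |(|u t| - s)| ≤ M * ρ ^ t := by
    intro t
    induction t with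
    | zero =>
      simp only [pow_zero, mul_one]
      have h1 : |u 0| ≤ 2 * sm := le_trans hu0 (by simpa using hη2 0)
      have h2 : 0 ≤ (1 - ρ) * M := mul_nonneg hρ'.le hM0
      rw [abs_le]
      constructor
      · have := abs_nonneg (u 0); linarith
      · linarith
    | succ t ih =>
      have ih' := abs_le.mp ih
      have hpt : (0:ℝ) < ρ ^ t := pow_pos hρ0 t
      have hη1t := hη1 t
      have hη2t := hη2 t
      have hη0t : 0 ≤ η t := le_trans (mul_nonneg hsm0 hpt.le) hη1t
      have hpow : ρ ^ (t + 1) = ρ ^ t * ρ := by ring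
      rcases lt_trichotomy (u t ^ 2) lam with h | h | h
      · -- below the fixed point: |u| grows by η t
        have ha : |u t| < s := by
          apply aux_lt_of_sq_lt _ _ (abs_nonneg _) hs0
          rw [sq_abs, hs2]; exact h
        have hnext : |u (t+1)| = |u t| + η t := by
          rcases (hne t).lt_or_gt with hu | hu
          · have hsign : Real.sign ((u t ^ 2 - lam) * u t) = 1 :=
              Real.sign_of_pos (mul_pos_of_neg_of_neg (by linarith) hu)
            rw [hrec t, hsign, mul_one, abs_of_neg hu, abs_of_neg (by linarith)]
            ring
          · have hsign : Real.sign ((u t ^ 2 - lam) * u t) = -1 :=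
              Real.sign_of_neg (mul_neg_of_neg_of_pos (by linarith) hu)
            rw [hrec t, hsign, abs_of_pos hu, abs_of_pos (by linarith)]
            ring
        rw [hnext, hpow]
        exact aux_step_below (|u t|) s sm M ρ (ρ ^ t) (η t) hs0 hsm0 hssm hρ1 hρ2 hpt
          hM hM0 hη1t hη2t ha ih'.1
      · -- exactly at the fixed point
        have hu' : |u t| = s := by rw [hsdef, ← h, Real.sqrt_sq_eq_abs]
        have hsign : Real.sign ((u t ^ 2 - lam) * u t) = 0 := by
          rw [h]; simp
        have hnext : u (t + 1) = u t := by rw [hrec t, hsign]; ring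
        rw [hnext, hu']
        simp only [sub_self, abs_zero]
        exact mul_nonneg hM0 (pow_nonneg hρ0.le _)
      · -- above the fixed point: |u| moves by -η t (possibly crossing zero)
        have ha : s < |u t| := by
          apply aux_lt_of_sq_lt _ _ hs0 (abs_nonneg _)
          rw [sq_abs, hs2]; exact h
        have hnext : |u (t+1)| = |(|u t| - η t)| := by
          rcases (hne t).lt_or_gt with hu | hu
          · have hsign : Real.sign ((u t ^ 2 - lam) * u t) = -1 :=
              Real.sign_of_neg (mul_neg_of_pos_of_neg (by linarith) hu)
            rw [hrec t, hsign, abs_of_neg hu,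
              show u t - η t * (-1) = -(-u t - η t) by ring, abs_neg]
          · have hsign : Real.sign ((u t ^ 2 - lam) * u t) = 1 :=
              Real.sign_of_pos (mul_pos (by linarith) hu)
            rw [hrec t, hsign, mul_one, abs_of_pos hu]
        rw [hnext, hpow]
        exact aux_step_above (|u t|) s sm M ρ (ρ ^ t) (η t) hs0 hsm0 hssm hρ1 hρ2 hpt
          hM hM0 hη1t hη2t ha ih'.2
  intro t
  have h1 := key t
  have hpt : (0:ℝ) < ρ ^ t := pow_pos hρ0 t
  have hpt1 : ρ ^ t ≤ 1 := pow_le_one₀ hρ0.le hρ2.le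
  have habs : |u t ^ 2 - lam| = |(|u t| - s)| * (|u t| + s) := by
    rw [← sq_abs (u t), ← hs2, show |u t| ^ 2 - s ^ 2 = (|u t| - s) * (|u t| + s) by ring,
      abs_mul, abs_of_nonneg (add_nonneg (abs_nonneg (u t)) hs0)]
  have hsum : |u t| + s ≤ M * ρ ^ t + 2 * sm := by
    have := (abs_le.mp h1).2
    linarith
  have hMρ2 : (ρ * M) ^ 2 = 4 * lamMax := by rw [hM]; linear_combination 4 * hsm2
  have h2 : |u t ^ 2 - lam| ≤ M ^ 2 * ρ ^ t + 2 * sm * M * ρ ^ t := by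
    rw [habs]
    have hfac : |(|u t| - s)| * (|u t| + s) ≤ (M * ρ ^ t) * (M * ρ ^ t + 2 * sm) :=
      mul_le_mul h1 hsum (by positivity) (by positivity)
    have hq2 : (ρ ^ t) ^ 2 ≤ ρ ^ t := by nlinarith
    nlinarith [mul_le_mul_of_nonneg_left hq2 (sq_nonneg M)]
  have e1 : M ^ 2 ≤ 4 / (1 - ρ) ^ 2 * lamMax := by
    rw [div_mul_eq_mul_div, le_div_iff₀ (by positivity)]
    nlinarith [hMρ2, sq_nonneg M]
  have e2 : 2 * sm * M ≤ 4 / (1 - ρ) * lamMax := by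
    rw [div_mul_eq_mul_div, le_div_iff₀ hρ']
    have hsmM : 2 * sm * M = ρ * M ^ 2 := by linear_combination -M * hM
    have hMρ2' : ρ ^ 2 * M ^ 2 = 4 * lamMax := by linear_combination hMρ2
    have h4 : 0 ≤ M ^ 2 * (ρ * (2 * ρ - 1)) :=
      mul_nonneg (sq_nonneg M) (mul_nonneg hρ0.le (by linarith))
    have e2' : ρ * M ^ 2 * (1 - ρ) ≤ 4 * lamMax := by linarith [hMρ2', h4]
    calc 2 * sm * M * (1 - ρ) = ρ * M ^ 2 * (1 - ρ) := by linear_combination (1 - ρ) * hsmM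
      _ ≤ 4 * lamMax := e2'
  calc |u t ^ 2 - lam| ≤ M ^ 2 * ρ ^ t + 2 * sm * M * ρ ^ t := h2
    _ ≤ (4 / (1 - ρ) ^ 2 + 4 / (1 - ρ)) * lamMax * ρ ^ t := by
      have f1 := mul_le_mul_of_nonneg_right e1 hpt.le
      have f2 := mul_le_mul_of_nonneg_right e2 hpt.le
      ring_nf at f1 f2 ⊢
      linarith
end

section
/- Let M* be a d×d positive semidefinite matrix with eigendecomposition M* = V*Λ*V*ᵀ, where Λ* = diag(λ*_1,…,λ*_r) has positive entries and V* ∈ ℝ^{d×r} has orthonormal columns. Suppose U_t = V*·Σ_t·Oᵀ for a diagonal Σ_t = diag(σ_{1,t},…,σ_{r,t}) and O ∈ ℝ^{k×r} with OᵀO = I_r, and assume the gradient ∇f(U_t) = (U_tU_tᵀ - M*)U_t has all diagonal entries (Σ_t² - Λ*)Σ_t nonzero in absolute value. Then the simplified Muon update U_{t+1} = U_t - η_t·msign(∇f(U_t)) satisfies U_{t+1} = V*·Σ_{t+1}·Oᵀ with Σ_{t+1} = Σ_t - η_t·dsign((Σ_t² - Λ*)Σ_t), i.e., σ_{i,t+1}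 = σ_{i,t} - η_t·sign((σ_{i,t}² - λ*_i)σ_{i,t}) for each i. -/
open Matrix

/-- Matrix sign: `msign Z = Z (Zᴴ Z)^{-1/2}` (pseudo-inverse square root via the hermitian
functional calculus), which equals `U Vᵀ` for a compact SVD `Z = U Σ Vᵀ`. -/
noncomputable def msign {m n : ℕ} (Z : Matrix (Fin m) (Fin n) ℝ) : Matrix (Fin m) (Fin n) ℝ :=
  Z * (Matrix.posSemidef_conjTranspose_mul_self Z).1.cfc
      (fun x => if x ≤ 0 then 0 else x ^ (-(1 / 2 : ℝ)))

open Polynomial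

variable {d k r : ℕ}


lemma diag_congr (V : Matrix (Fin d) (Fin r) ℝ) (O : Matrix (Fin k) (Fin r) ℝ)
    {f1 f2 : Fin r → ℝ} (h : ∀ i, f1 i = f2 i) :
    V * diagonal f1 * Oᵀ = V * diagonal f2 * Oᵀ := by
  rw [funext h]

lemma aux_aeval (V : Matrix (Fin d) (Fin r) ℝ) (O : Matrix (Fin k) (Fin r) ℝ)
    (hO : Oᵀ * O = 1) (g w : Fin r → ℝ) (p : ℝ[X]) :
    (V * diagonal g * Oᵀ) * (Polynomial.aeval (O * diagonal w * Oᵀ)) p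
      = V * diagonal (fun i => g i * p.eval (w i)) * Oᵀ := by
  induction p using Polynomial.induction_on with
  | C c =>
      have h1 : (Polynomial.aeval (O * diagonal w * Oᵀ)) (C c)
          = c • (1 : Matrix (Fin k) (Fin k) ℝ) := by
        simp [Algebra.algebraMap_eq_smul_one]
      rw [h1, Matrix.mul_smul, Matrix.mul_one]
      rw [show (fun i => g i * (C c).eval (w i)) = c • g by
        funext i; simp [mul_comm]]
      rw [Matrix.diagonal_smul, Matrix.mul_smul, Matrix.smul_mul]
  | add p q hp hq =>
      rw [map_add, Matrix.mul_add, hp, hq]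
      rw [← Matrix.add_mul, ← Matrix.mul_add, Matrix.diagonal_add]
      exact diag_congr V O (fun i => by rw [eval_add]; ring)
  | monomial n c ih =>
      have hsplit : (C c * X ^ (n + 1) : ℝ[X]) = (C c * X ^ n) * X := by ring
      rw [hsplit, _root_.map_mul, Polynomial.aeval_X, ← Matrix.mul_assoc, ih]
      have h2 : Oᵀ * (O * diagonal w * Oᵀ) = diagonal w * Oᵀ := by
        rw [← Matrix.mul_assoc, ← Matrix.mul_assoc, hO, Matrix.one_mul]
      rw [Matrix.mul_assoc _ Oᵀ (O * diagonal w * Oᵀ), h2, ← Matrix.mul_assoc,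
        Matrix.mul_assoc V, Matrix.diagonal_mul_diagonal]
      exact diag_congr V O (fun i => by
        simp only [eval_mul, eval_pow, eval_C, eval_X]; ring)

lemma aux_spectrum (O : Matrix (Fin k) (Fin r) ℝ) (hO : Oᵀ * O = 1) (w : Fin r → ℝ) :
    spectrum ℝ (O * diagonal w * Oᵀ) ⊆ insert 0 (Set.range w) := by
  intro μ hμ
  rw [spectrum.mem_iff] at hμ
  rw [Matrix.isUnit_iff_isUnit_det, isUnit_iff_ne_zero, not_not] at hμ
  obtain ⟨x, hx0, hx⟩ := (Matrix.exists_mulVec_eq_zero_iff).mpr hμ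
  have hAx : (O * diagonal w * Oᵀ) *ᵥ x = μ • x := by
    rw [Matrix.sub_mulVec] at hx
    have h1 : (algebraMap ℝ (Matrix (Fin k) (Fin k) ℝ)) μ *ᵥ x = μ • x := by
      simp [Algebra.algebraMap_eq_smul_one, Matrix.smul_mulVec]
    rw [h1, sub_eq_zero] at hx
    exact hx.symm
  set y := Oᵀ *ᵥ x with hy
  have hDy : diagonal w *ᵥ y = μ • y := by
    have h2 : Oᵀ * (O * diagonal w * Oᵀ) = diagonal w * Oᵀ := by
      rw [← Matrix.mul_assoc, ← Matrix.mul_assoc, hO, Matrix.one_mul]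
    calc diagonal w *ᵥ y = (diagonal w * Oᵀ) *ᵥ x := by rw [hy, Matrix.mulVec_mulVec]
    _ = Oᵀ *ᵥ ((O * diagonal w * Oᵀ) *ᵥ x) := by rw [Matrix.mulVec_mulVec, h2]
    _ = μ • y := by rw [hAx, Matrix.mulVec_smul]
  by_cases hy0 : y = 0
  · left
    have h3 : (O * diagonal w * Oᵀ) *ᵥ x = 0 := by
      have h5 : (O * diagonal w * Oᵀ) *ᵥ x = (O * diagonal w) *ᵥ y := by
        rw [hy, Matrix.mulVec_mulVec]
      rw [h5, hy0, Matrix.mulVec_zero]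
    rw [h3] at hAx
    rcases smul_eq_zero.mp hAx.symm with h | h
    · exact h
    · exact absurd h hx0
  · right
    obtain ⟨j, hj⟩ := Function.ne_iff.mp hy0
    refine ⟨j, ?_⟩
    have h4 := congrFun hDy j
    simp only [Matrix.mulVec_diagonal, Pi.smul_apply, smul_eq_mul] at h4
    exact mul_right_cancel₀ hj h4


/-- Decoupling of the simplified Muon update for matrix factorization: if
`U_t = V* Σ_t Oᵀ` with `V*` and `O` having orthonormal columns and `Σ_t` diagonal, and the
diagonal gradient entries `(σᵢ² - λᵢ)σᵢ` are all nonzero, then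
`U_{t+1} = U_t - η·msign((U_tU_tᵀ - M*)U_t)` is again of this form, with
`σ_{i,t+1} = σ_{i,t} - η·sign((σ_{i,t}² - λᵢ)σ_{i,t})`. -/
theorem stmt8 (d k r : ℕ)
    (V : Matrix (Fin d) (Fin r) ℝ) (hV : Vᵀ * V = 1)
    (O : Matrix (Fin k) (Fin r) ℝ) (hO : Oᵀ * O = 1)
    (lam : Fin r → ℝ) (hlam : ∀ i, 0 < lam i)
    (σ : Fin r → ℝ) (η : ℝ)
    (hgrad : ∀ i, (σ i ^ 2 - lam i) * σ i ≠ 0) :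
    let M : Matrix (Fin d) (Fin d) ℝ := V * Matrix.diagonal lam * Vᵀ
    let U : Matrix (Fin d) (Fin k) ℝ := V * Matrix.diagonal σ * Oᵀ
    U - η • msign ((U * Uᵀ - M) * U) =
      V * Matrix.diagonal (fun i => σ i - η * Real.sign ((σ i ^ 2 - lam i) * σ i)) * Oᵀ := by
  intro M U
  set g : Fin r → ℝ := fun i => (σ i ^ 2 - lam i) * σ i with hgdef
  set w : Fin r → ℝ := fun i => g i ^ 2 with hwdef
  -- Step 1: the gradient is V diag(g) Oᵀ
  have hUt : Uᵀ = O * (diagonal σ * Vᵀ) := by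
    show (V * diagonal σ * Oᵀ)ᵀ = _
    rw [Matrix.transpose_mul, Matrix.transpose_mul, Matrix.transpose_transpose,
      Matrix.diagonal_transpose]
  have hZ : (U * Uᵀ - M) * U = V * diagonal g * Oᵀ := by
    have h1 : U * Uᵀ = V * diagonal (fun i => σ i * σ i) * Vᵀ := by
      rw [hUt]
      show V * diagonal σ * Oᵀ * (O * (diagonal σ * Vᵀ)) = _
      rw [Matrix.mul_assoc (V * diagonal σ) Oᵀ _, ← Matrix.mul_assoc Oᵀ O _, hO,
        Matrix.one_mul, ← Matrix.mul_assoc, Matrix.mul_assoc V,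
        Matrix.diagonal_mul_diagonal]
    rw [h1]
    show (V * diagonal (fun i => σ i * σ i) * Vᵀ - V * diagonal lam * Vᵀ)
        * (V * diagonal σ * Oᵀ) = _
    rw [← Matrix.sub_mul, ← Matrix.mul_sub, Matrix.diagonal_sub]
    rw [Matrix.mul_assoc _ Vᵀ _, Matrix.mul_assoc V (diagonal σ) Oᵀ,
      ← Matrix.mul_assoc Vᵀ V (diagonal σ * Oᵀ), hV, Matrix.one_mul,
      ← Matrix.mul_assoc, Matrix.mul_assoc V, Matrix.diagonal_mul_diagonal]
    exact diag_congr V O (fun i => by simp only [hgdef]; ring)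
  -- Step 2: Zᴴ Z = O diag(w) Oᵀ
  set Z : Matrix (Fin d) (Fin k) ℝ := V * diagonal g * Oᵀ with hZdef
  have hZtZ : Zᴴ * Z = O * diagonal w * Oᵀ := by
    have hZt : Zᴴ = O * diagonal g * Vᵀ := by
      rw [hZdef, Matrix.conjTranspose_eq_transpose_of_trivial,
        Matrix.transpose_mul, Matrix.transpose_mul, Matrix.transpose_transpose,
        Matrix.diagonal_transpose, ← Matrix.mul_assoc]
    rw [hZt, hZdef]
    rw [Matrix.mul_assoc _ Vᵀ _, Matrix.mul_assoc V (diagonal g) Oᵀ,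
      ← Matrix.mul_assoc Vᵀ V (diagonal g * Oᵀ), hV, Matrix.one_mul,
      ← Matrix.mul_assoc, Matrix.mul_assoc O, Matrix.diagonal_mul_diagonal]
    exact diag_congr O O (fun i => by simp only [hwdef]; ring)
  -- Step 3: the cfc is a polynomial in ZᴴZ
  set s : Finset ℝ := insert (0:ℝ) (Finset.image w Finset.univ) with hsdef
  set p : ℝ[X] :=
    Lagrange.interpolate s id (fun x => if x ≤ 0 then 0 else x ^ (-(1 / 2 : ℝ))) with hpdef
  have hnode : ∀ x ∈ s, p.eval x
      = if x ≤ 0 then 0 else x ^ (-(1 / 2 : ℝ)) := by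
    intro x hx
    exact Lagrange.eval_interpolate_at_node _ (Set.injOn_id _) hx
  have hsub : spectrum ℝ (O * diagonal w * Oᵀ) ⊆ (s : Set ℝ) := by
    refine (aux_spectrum O hO w).trans ?_
    intro x hx
    rcases hx with rfl | ⟨i, rfl⟩
    · simp [hsdef]
    · exact Finset.mem_coe.mpr
        (Finset.mem_insert_of_mem (Finset.mem_image_of_mem w (Finset.mem_univ i)))
  have hsa : IsSelfAdjoint (O * diagonal w * Oᵀ) :=
    hZtZ ▸ (Matrix.posSemidef_conjTranspose_mul_self Z).1
  have hcfc : (Matrix.posSemidef_conjTranspose_mul_self Z).1.cfc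
      (fun x => if x ≤ 0 then 0 else x ^ (-(1 / 2 : ℝ)))
      = (Polynomial.aeval (O * diagonal w * Oᵀ)) p := by
    rw [← Matrix.IsHermitian.cfc_eq, hZtZ]
    rw [cfc_congr (fun x hx => (hnode x (hsub hx)).symm :
      Set.EqOn (fun x => if x ≤ 0 then 0 else x ^ (-(1 / 2 : ℝ))) p.eval
        (spectrum ℝ (O * diagonal w * Oᵀ)))]
    exact cfc_polynomial p _ hsa
  -- Step 4: evaluate
  have hval : ∀ i, g i * p.eval (w i) = Real.sign (g i) := by
    intro i
    have hg0 : g i ≠ 0 := by simp only [hgdef]; exact hgrad i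
    have hw0 : (0:ℝ) < w i := by
      simp only [hwdef]; positivity
    have hmem : w i ∈ s :=
      Finset.mem_insert_of_mem (Finset.mem_image_of_mem w (Finset.mem_univ i))
    rw [hnode _ hmem, if_neg (not_le.mpr hw0)]
    have habs : (w i : ℝ) ^ (-(1 / 2 : ℝ)) = |g i|⁻¹ := by
      have h1 : (w i : ℝ) = |g i| ^ ((2:ℕ):ℝ) := by
        rw [Real.rpow_natCast]
        simp only [hwdef]
        rw [sq_abs]
      have h2 : ((2:ℕ):ℝ) * (-(1 / 2 : ℝ)) = -1 := by norm_num
      rw [h1, ← Real.rpow_mul (abs_nonneg _), h2, Real.rpow_neg_one]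
    rw [habs]
    rcases lt_or_gt_of_ne hg0 with hlt | hgt
    · rw [Real.sign_of_neg hlt, abs_of_neg hlt]
      field_simp
    · rw [Real.sign_of_pos hgt, abs_of_pos hgt]
      field_simp
  -- Step 5: assemble
  have hmsign : msign ((U * Uᵀ - M) * U)
      = V * diagonal (fun i => Real.sign (g i)) * Oᵀ := by
    rw [hZ]
    unfold msign
    rw [hcfc, hZdef, aux_aeval V O hO g w p]
    exact diag_congr V O hval
  rw [hmsign]
  show V * diagonal σ * Oᵀ - η • (V * diagonal (fun i => Real.sign (g i)) * Oᵀ) = _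
  rw [← Matrix.smul_mul, ← Matrix.mul_smul, ← Matrix.diagonal_smul,
    ← Matrix.sub_mul, ← Matrix.mul_sub, Matrix.diagonal_sub]
  exact diag_congr V O (fun i => by simp only [hgdef, Pi.smul_apply, smul_eq_mul])
end

section
/- Let S be a d×d symmetric positive definite matrix with eigendecomposition S = V*Λ*V*ᵀ, Λ* = diag(λ*_1,…,λ*_d), λ*_i > 0. Consider the iteration Q_{t+1} = Q_t - η_t·msign(S²Q_tS - S²) initialized at Q_0 = 0. Then for every t ≥ 0 there exists a diagonal matrix Θ_t = diag(θ_{1,t},…,θ_{d,t}) with Q_t = V*Θ_tV*ᵀ, and the diagonals evolve as θ_{i,t+1} = θ_{i,t} - η_t·sign(λ*_i·θ_{i,t} - 1). -/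
open Matrix

open Polynomial


section helpers

lemma myConjPow {d : ℕ} {V M : Matrix (Fin d) (Fin d) ℝ} (hV : Vᵀ * V = 1) (hV' : V * Vᵀ = 1)
    (n : ℕ) : (V * M * Vᵀ) ^ n = V * M ^ n * Vᵀ := by
  induction n with
  | zero => simp [hV']
  | succ n ih =>
      rw [pow_succ, ih, pow_succ]
      calc V * M ^ n * Vᵀ * (V * M * Vᵀ) = V * M ^ n * (Vᵀ * V) * M * Vᵀ := by
            simp only [Matrix.mul_assoc]
        _ = V * (M ^ n * M) * Vᵀ := by rw [hV]; simp only [Matrix.mul_assoc, Matrix.mul_one]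

lemma myConjAeval {d : ℕ} {V M : Matrix (Fin d) (Fin d) ℝ} (hV : Vᵀ * V = 1) (hV' : V * Vᵀ = 1)
    (p : ℝ[X]) : aeval (V * M * Vᵀ) p = V * aeval M p * Vᵀ := by
  induction p using Polynomial.induction_on' with
  | add p q hp hq => simp [hp, hq, Matrix.mul_add, Matrix.add_mul]
  | monomial n a =>
      rw [aeval_monomial, aeval_monomial, myConjPow hV hV', ← Algebra.smul_def,
        ← Algebra.smul_def, Matrix.mul_smul, Matrix.smul_mul]

lemma myCfcConjDiag {d : ℕ} {V : Matrix (Fin d) (Fin d) ℝ} (hV : Vᵀ * V = 1)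
    (hV' : V * Vᵀ = 1) (w : Fin d → ℝ) (f : ℝ → ℝ) :
    cfc f (V * Matrix.diagonal w * Vᵀ) = V * Matrix.diagonal (fun i => f (w i)) * Vᵀ := by
  have hstar : star V = Vᵀ := by ext i j; simp [Matrix.star_apply]
  have hA : _root_.IsSelfAdjoint (V * Matrix.diagonal w * Vᵀ) := by
    rw [_root_.IsSelfAdjoint, star_eq_conjTranspose]
    simp [Matrix.conjTranspose_mul, Matrix.mul_assoc, Matrix.diagonal_conjTranspose]
  have hspec : spectrum ℝ (V * Matrix.diagonal w * Vᵀ) = Set.range w := by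
    have := spectrum.units_conjugate (R := ℝ)
      (u := (⟨V, Vᵀ, hV', hV⟩ : (Matrix (Fin d) (Fin d) ℝ)ˣ)) (a := Matrix.diagonal w)
    simpa [spectrum_diagonal] using this
  set s : Finset ℝ := Finset.image w Finset.univ with hs
  have hinj : Set.InjOn (id : ℝ → ℝ) s := Function.injective_id.injOn
  set p : ℝ[X] := Lagrange.interpolate s id f with hp
  have hnode : ∀ x ∈ s, p.eval x = f x := fun x hx =>
    Lagrange.eval_interpolate_at_node f hinj hx
  have h1 : cfc f (V * Matrix.diagonal w * Vᵀ) = cfc (fun x => p.eval x) (V * Matrix.diagonal w * Vᵀ) := by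
    apply cfc_congr
    intro x hx
    rw [hspec] at hx
    obtain ⟨i, rfl⟩ := hx
    exact (hnode _ (Finset.mem_image_of_mem w (Finset.mem_univ i))).symm
  rw [h1, cfc_polynomial p _ hA, myConjAeval hV hV']
  have h2 : aeval (Matrix.diagonal w) p = Matrix.diagonal (fun i => p.eval (w i)) := by
    rw [show Matrix.diagonal w = Matrix.diagonalAlgHom (n := Fin d) (α := ℝ) ℝ w from rfl,
      Polynomial.aeval_algHom_apply (Matrix.diagonalAlgHom ℝ) w p]
    simp only [Matrix.diagonalAlgHom_apply]
    refine congrArg Matrix.diagonal (funext fun i => ?_)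
    have := (Polynomial.aeval_algHom_apply (Pi.evalAlgHom ℝ (fun _ => ℝ) i) w p).symm
    simp only [Pi.evalAlgHom_apply] at this
    rw [show (aeval w p) i = (aeval (w i)) p from this, Polynomial.coe_aeval_eq_eval]
  rw [h2]
  have h3 : (fun i => p.eval (w i)) = fun i => f (w i) :=
    funext fun i => hnode _ (Finset.mem_image_of_mem w (Finset.mem_univ i))
  rw [h3]

variable {d : ℕ} {V : Matrix (Fin d) (Fin d) ℝ}

lemma myConjMul (hV : Vᵀ * V = 1) (a b : Fin d → ℝ) :
    (V * Matrix.diagonal a * Vᵀ) * (V * Matrix.diagonal b * Vᵀ)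
      = V * Matrix.diagonal (fun i => a i * b i) * Vᵀ := by
  calc (V * Matrix.diagonal a * Vᵀ) * (V * Matrix.diagonal b * Vᵀ)
      = V * Matrix.diagonal a * (Vᵀ * V) * Matrix.diagonal b * Vᵀ := by
        simp only [Matrix.mul_assoc]
    _ = V * (Matrix.diagonal a * Matrix.diagonal b) * Vᵀ := by
        rw [hV]; simp only [Matrix.mul_assoc, Matrix.mul_one]
    _ = _ := by rw [Matrix.diagonal_mul_diagonal]

lemma mySignMulPos {c x : ℝ} (hc : 0 < c) : Real.sign (c * x) = Real.sign x := by
  rcases lt_trichotomy x 0 with h | h | h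
  · rw [Real.sign_of_neg h, Real.sign_of_neg (mul_neg_of_pos_of_neg hc h)]
  · simp [h]
  · rw [Real.sign_of_pos h, Real.sign_of_pos (mul_pos hc h)]

lemma myMsignConj (hV : Vᵀ * V = 1) (hV' : V * Vᵀ = 1) (m : Fin d → ℝ) :
    msign (V * Matrix.diagonal m * Vᵀ)
      = V * Matrix.diagonal (fun i => Real.sign (m i)) * Vᵀ := by
  have hsa : (V * Matrix.diagonal m * Vᵀ)ᴴ = V * Matrix.diagonal m * Vᵀ := by
    simp [Matrix.conjTranspose_mul, Matrix.mul_assoc, Matrix.diagonal_conjTranspose]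
  unfold msign
  rw [← Matrix.IsHermitian.cfc_eq]
  rw [show (V * Matrix.diagonal m * Vᵀ)ᴴ * (V * Matrix.diagonal m * Vᵀ)
      = V * Matrix.diagonal (fun i => m i * m i) * Vᵀ from by rw [hsa, myConjMul hV]]
  rw [myCfcConjDiag hV hV', myConjMul hV]
  refine congrArg (fun D => V * Matrix.diagonal D * Vᵀ) (funext fun i => ?_)
  rcases eq_or_ne (m i) 0 with h | h
  · simp [h]
  · have hpos : 0 < m i * m i := mul_self_pos.mpr h
    rw [if_neg (not_le.mpr hpos)]
    have h1 : (m i * m i) ^ (-(1 / 2 : ℝ)) = |m i|⁻¹ := by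
      rw [Real.rpow_neg hpos.le, show m i * m i = |m i| ^ 2 from by
        rw [sq_abs]; ring, ← Real.rpow_natCast (|m i|) 2, ← Real.rpow_mul (abs_nonneg _)]
      norm_num
    rw [h1]
    rcases lt_or_gt_of_ne h with h2 | h2
    · rw [Real.sign_of_neg h2, abs_of_neg h2]
      field_simp
    · rw [Real.sign_of_pos h2, abs_of_pos h2]
      field_simp

end helpers


/-- Spectral decoupling of simplified Muon for the ICL quadratic: with
`S = V* Λ* V*ᵀ` positive definite and `Q_{t+1} = Q_t - η_t·msign(S²Q_tS - S²)`, `Q_0 = 0`,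
every iterate is of the form `Q_t = V* Θ_t V*ᵀ` with diagonal `Θ_t` evolving as
`θ_{i,t+1} = θ_{i,t} - η_t·sign(λᵢ·θ_{i,t} - 1)`. -/
theorem stmt9 (d : ℕ)
    (V : Matrix (Fin d) (Fin d) ℝ) (hV : Vᵀ * V = 1) (hV' : V * Vᵀ = 1)
    (lam : Fin d → ℝ) (hlam : ∀ i, 0 < lam i)
    (η : ℕ → ℝ) (Q : ℕ → Matrix (Fin d) (Fin d) ℝ)
    (hQ0 : Q 0 = 0)
    (hrec : ∀ t,
      Q (t + 1) = Q t - η t •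
        msign ((V * Matrix.diagonal lam * Vᵀ) ^ 2 * Q t * (V * Matrix.diagonal lam * Vᵀ) -
          (V * Matrix.diagonal lam * Vᵀ) ^ 2)) :
    ∃ θ : ℕ → Fin d → ℝ,
      (∀ t, Q t = V * Matrix.diagonal (θ t) * Vᵀ) ∧
        ∀ t i, θ (t + 1) i = θ t i - η t * Real.sign (lam i * θ t i - 1) := by
  set θ : ℕ → Fin d → ℝ := fun t => Nat.rec (motive := fun _ => Fin d → ℝ) (fun _ => 0)
    (fun t θt i => θt i - η t * Real.sign (lam i * θt i - 1)) t with hθ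
  refine ⟨θ, ?_, fun t i => rfl⟩
  intro t
  induction t with
  | zero =>
      rw [hQ0]
      have h0 : Matrix.diagonal (θ 0) = 0 := by
        have : θ 0 = fun _ => (0:ℝ) := rfl
        rw [this]
        ext i j
        simp [Matrix.diagonal_apply]
      rw [h0, Matrix.mul_zero, Matrix.zero_mul]
  | succ t ih =>
      have hsq : (V * Matrix.diagonal lam * Vᵀ) ^ 2
          = V * Matrix.diagonal (fun i => lam i * lam i) * Vᵀ := by
        rw [sq, myConjMul hV]
      have harg : (V * Matrix.diagonal lam * Vᵀ) ^ 2 * Q t * (V * Matrix.diagonal lam * Vᵀ) -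
            (V * Matrix.diagonal lam * Vᵀ) ^ 2
          = V * Matrix.diagonal
              (fun i => (lam i * lam i) * (lam i * θ t i - 1)) * Vᵀ := by
        rw [hsq, ih, myConjMul hV, myConjMul hV, ← Matrix.sub_mul, ← Matrix.mul_sub,
          Matrix.diagonal_sub]
        refine congrArg (fun D => V * Matrix.diagonal D * Vᵀ) (funext fun i => ?_)
        ring
      rw [hrec t, harg, myMsignConj hV hV', ih]
      have hsgn : (fun i => Real.sign ((lam i * lam i) * (lam i * θ t i - 1)))
          = fun i => Real.sign (lam i * θ t i - 1) := by
        funext i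
        exact mySignMulPos (mul_pos (hlam i) (hlam i))
      rw [hsgn]
      have hsmul : η t • (V * Matrix.diagonal (fun i => Real.sign (lam i * θ t i - 1)) * Vᵀ)
          = V * (η t • Matrix.diagonal (fun i => Real.sign (lam i * θ t i - 1))) * Vᵀ := by
        rw [← Matrix.smul_mul, ← Matrix.mul_smul]
      rw [hsmul, ← Matrix.diagonal_smul, ← Matrix.sub_mul, ← Matrix.mul_sub,
        Matrix.diagonal_sub]
      refine congrArg (fun D => V * Matrix.diagonal D * Vᵀ) (funext fun i => ?_)
      rfl
end

section
/- Consider the two-dimensional quadratic f(z) = (1/2)zᵀHz with H = (1/2)·[[κ+1,κ-1],[κ-1,κ+1]], κ ≥ 2, and the SignGD iteration z_{t+1} = z_t - η_t·sign(Hz_t) (entrywise sign), with any non-increasing positive learning rates (η_t). For any accuracy 0 < ε ≤ η_0/κ, there exists an initialization z_0 ∈ [-2η_0, 2η_0]² such that ‖z_t‖₂ ≤ ε implies t ≥ (κ-1)/4. -/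
open Matrix

/-- Forward affine recursion `a_{t+1} = 2 η_t - a_t`. -/
private def sA (η : ℕ → ℝ) (x : ℝ) : ℕ → ℝ
  | 0 => x
  | t + 1 => 2 * η t - sA η x t

private lemma sA_sub (η : ℕ → ℝ) (x y : ℝ) :
    ∀ t, sA η x t - sA η y t = (-1) ^ t * (x - y)
  | 0 => by simp [sA]
  | t + 1 => by
      have h := sA_sub η x y t
      simp only [sA, pow_succ]
      linear_combination (-1 : ℝ) * h

/-- Backward construction for horizon `n`. -/
private def sB (η : ℕ → ℝ) (ε : ℝ) (n : ℕ) : ℕ → ℝ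
  | 0 => 3 * ε
  | k + 1 => 2 * η (n - 1 - k) - sB η ε n k

private lemma sB_mem (η : ℕ → ℝ) (ε : ℝ) (n : ℕ) (hε : 0 < ε)
    (hmono : ∀ s t, s ≤ t → η t ≤ η s) (hn : 4 * ε ≤ η n) :
    ∀ k, k ≤ n → 3 * ε ≤ sB η ε n k ∧ sB η ε n k ≤ 2 * η (n - k) - 3 * ε := by
  intro k
  induction k with
  | zero =>
      intro _
      simp only [sB, Nat.sub_zero]
      constructor
      · linarith
      · linarith
  | succ k ih =>
      intro hk
      obtain ⟨h1, h2⟩ := ih (by omega)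
      have hidx : n - 1 - k = n - (k + 1) := by omega
      have hmle : η (n - k) ≤ η (n - 1 - k) := hmono _ _ (by omega)
      constructor
      · show 3 * ε ≤ 2 * η (n - 1 - k) - sB η ε n k
        linarith
      · show 2 * η (n - 1 - k) - sB η ε n k ≤ 2 * η (n - (k + 1)) - 3 * ε
        rw [← hidx]
        linarith

private lemma sA_eq_sB (η : ℕ → ℝ) (ε : ℝ) (n : ℕ) :
    ∀ t, t ≤ n → sA η (sB η ε n n) t = sB η ε n (n - t) := by
  intro t
  induction t with
  | zero => intro _; simp [sA]
  | succ t ih =>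
      intro ht
      have h1 : sA η (sB η ε n n) (t + 1) = 2 * η t - sB η ε n (n - t) := by
        rw [show sA η (sB η ε n n) (t + 1) = 2 * η t - sA η (sB η ε n n) t from rfl,
          ih (by omega)]
      have hnt : n - t = (n - (t + 1)) + 1 := by omega
      have h2 : sB η ε n (n - t) = 2 * η (n - 1 - (n - (t + 1))) - sB η ε n (n - (t + 1)) := by
        rw [hnt]; rfl
      have h3 : n - 1 - (n - (t + 1)) = t := by omega
      rw [h1, h2, h3]; ring

private lemma exists_fin (η : ℕ → ℝ) (ε : ℝ) (n : ℕ) (hε : 0 < ε)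
    (hmono : ∀ s t, s ≤ t → η t ≤ η s) (hn : 4 * ε ≤ η n) :
    ∃ x : ℝ, ∀ t, t ≤ n → 3 * ε ≤ sA η x t ∧ sA η x t ≤ 2 * η t - 3 * ε := by
  refine ⟨sB η ε n n, fun t ht => ?_⟩
  rw [sA_eq_sB η ε n t ht]
  have h := sB_mem η ε n hε hmono hn (n - t) (by omega)
  rwa [show n - (n - t) = t from by omega] at h

private lemma abs_sign_le_one (y : ℝ) : |Real.sign y| ≤ 1 := by
  rcases lt_trichotomy y 0 with h | h | h
  · rw [Real.sign_of_neg h]; norm_num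
  · rw [h, Real.sign_zero]; norm_num
  · rw [Real.sign_of_pos h]; norm_num

set_option maxHeartbeats 1600000 in
/-- Iteration-complexity lower bound for SignGD on the ill-conditioned 2×2 quadratic
`f(z) = (1/2)zᵀHz`, `H = (1/2)[[κ+1,κ-1],[κ-1,κ+1]]`: for any non-increasing positive
learning rates and any `0 < ε ≤ η₀/κ`, there is an initialization `z₀ ∈ [-2η₀, 2η₀]²` such
that `‖z_t‖₂ ≤ ε` forces `t ≥ (κ-1)/4`. -/
theorem stmt12 (κ : ℝ) (hκ : 2 ≤ κ)
    (η : ℕ → ℝ) (hηpos : ∀ t, 0 < η t) (hηmono : ∀ s t, s ≤ t → η t ≤ η s)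
    (ε : ℝ) (hε : 0 < ε) (hε' : ε ≤ η 0 / κ) :
    let H : Matrix (Fin 2) (Fin 2) ℝ := (1 / 2 : ℝ) • !![κ + 1, κ - 1; κ - 1, κ + 1]
    ∃ z₀ : Fin 2 → ℝ, (∀ i, z₀ i ∈ Set.Icc (-(2 * η 0)) (2 * η 0)) ∧
      ∀ z : ℕ → Fin 2 → ℝ, z 0 = z₀ →
        (∀ t i, z (t + 1) i = z t i - η t * Real.sign (H.mulVec (z t) i)) →
        ∀ t : ℕ, Real.sqrt ((z t 0) ^ 2 + (z t 1) ^ 2) ≤ ε → (κ - 1) / 4 ≤ (t : ℝ) := by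
  intro H
  have hH : H = (1 / 2 : ℝ) • !![κ + 1, κ - 1; κ - 1, κ + 1] := rfl
  have hκpos : (0 : ℝ) < κ := by linarith
  have hκε : κ * ε ≤ η 0 := by
    rw [le_div_iff₀ hκpos] at hε'
    linarith
  have hη0 : 0 < η 0 := hηpos 0
  -- interval endpoints for admissible x
  set L : ℕ → ℝ := fun t => if Even t then 3 * ε - sA η 0 t else sA η 0 t - (2 * η t - 3 * ε)
    with hLdef
  set R : ℕ → ℝ := fun t => if Even t then 2 * η t - 3 * ε - sA η 0 t else sA η 0 t - 3 * ε
    with hRdef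
  have hiff : ∀ (x : ℝ) (t : ℕ),
      (3 * ε ≤ sA η x t ∧ sA η x t ≤ 2 * η t - 3 * ε) ↔ (L t ≤ x ∧ x ≤ R t) := by
    intro x t
    have hsub := sA_sub η x 0 t
    rcases Nat.even_or_odd t with he | ho
    · rw [he.neg_one_pow] at hsub
      simp only [hLdef, hRdef, if_pos he]
      constructor <;> rintro ⟨h1, h2⟩ <;> constructor <;> linarith
    · rw [ho.neg_one_pow] at hsub
      simp only [hLdef, hRdef, if_neg (Nat.not_even_iff_odd.mpr ho)]
      constructor <;> rintro ⟨h1, h2⟩ <;> constructor <;> linarith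
  have hpair : ∀ s t, 4 * ε ≤ η s → 4 * ε ≤ η t → L s ≤ R t := by
    intro s t hs ht
    have hmax : 4 * ε ≤ η (max s t) := by
      rcases max_choice s t with h | h <;> rw [h] <;> assumption
    obtain ⟨x, hx⟩ := exists_fin η ε (max s t) hε hηmono hmax
    have h1 := (hiff x s).mp (hx s (le_max_left _ _))
    have h2 := (hiff x t).mp (hx t (le_max_right _ _))
    linarith [h1.1, h2.2]
  -- choose x
  have hmain : ∃ x : ℝ, (0 ≤ x ∧ x ≤ 2 * η 0) ∧
      ∀ t, 4 * ε ≤ η t → 3 * ε ≤ sA η x t ∧ sA η x t ≤ 2 * η t - 3 * ε := by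
    by_cases hS : 4 * ε ≤ η 0
    · set X : Set ℝ := L '' {t | 4 * ε ≤ η t} with hXdef
      have hXne : X.Nonempty := ⟨L 0, 0, hS, rfl⟩
      have hXbdd : BddAbove X := by
        refine ⟨R 0, ?_⟩
        rintro y ⟨t, ht, rfl⟩
        exact hpair t 0 ht hS
      refine ⟨sSup X, ?_, ?_⟩
      · have hkey0 : 3 * ε ≤ sA η (sSup X) 0 ∧ sA η (sSup X) 0 ≤ 2 * η 0 - 3 * ε := by
          refine (hiff (sSup X) 0).mpr ⟨le_csSup hXbdd ⟨0, hS, rfl⟩, ?_⟩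
          refine csSup_le hXne ?_
          rintro y ⟨s, hs, rfl⟩
          exact hpair s 0 hs hS
        have h0 : sA η (sSup X) 0 = sSup X := rfl
        rw [h0] at hkey0
        constructor <;> linarith [hkey0.1, hkey0.2]
      · intro t ht
        refine (hiff (sSup X) t).mpr ⟨le_csSup hXbdd ⟨t, ht, rfl⟩, ?_⟩
        refine csSup_le hXne ?_
        rintro y ⟨s, hs, rfl⟩
        exact hpair s t hs ht
    · refine ⟨0, ⟨le_refl 0, by linarith⟩, ?_⟩
      intro t ht
      exact absurd (le_trans ht (hηmono 0 t (Nat.zero_le t))) hS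
  obtain ⟨x, ⟨hx0, hx2⟩, hkey⟩ := hmain
  refine ⟨![(x + 2 * (κ * ε)) / 2, (x - 2 * (κ * ε)) / 2], ?_, ?_⟩
  · intro i
    have hκε2 : 0 < κ * ε := mul_pos hκpos hε
    fin_cases i <;> simp [Set.mem_Icc] <;> constructor <;> linarith
  · intro z hz0 hrec t hnorm
    -- squared norm bound
    have hnn : (0 : ℝ) ≤ z t 0 ^ 2 + z t 1 ^ 2 := by positivity
    have hsq : z t 0 ^ 2 + z t 1 ^ 2 ≤ ε ^ 2 := by
      nlinarith [Real.sq_sqrt hnn, Real.sqrt_nonneg (z t 0 ^ 2 + z t 1 ^ 2)]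
    -- mulVec formula
    have hmv : ∀ s : ℕ,
        H.mulVec (z s) 0 = (κ * (z s 0 + z s 1) + (z s 0 - z s 1)) / 2 ∧
        H.mulVec (z s) 1 = (κ * (z s 0 + z s 1) - (z s 0 - z s 1)) / 2 := by
      intro s
      rw [hH]
      constructor <;>
        · simp [Matrix.mulVec, dotProduct, Fin.sum_univ_two]
          ring
    -- main invariant
    have inv : ∀ s : ℕ, (∀ r, r < s → 4 * ε ≤ η r) →
        z s 0 + z s 1 = (-1) ^ s * sA η x s ∧ z s 0 - z s 1 = 2 * (κ * ε) := by
      intro s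
      induction s with
      | zero =>
          intro _
          rw [hz0]
          constructor
          · show (x + 2 * (κ * ε)) / 2 + (x - 2 * (κ * ε)) / 2 = (-1 : ℝ) ^ 0 * sA η x 0
            show (x + 2 * (κ * ε)) / 2 + (x - 2 * (κ * ε)) / 2 = (-1 : ℝ) ^ 0 * x
            ring
          · show (x + 2 * (κ * ε)) / 2 - (x - 2 * (κ * ε)) / 2 = 2 * (κ * ε)
            ring
      | succ s ih =>
          intro hr
          have hs4 : 4 * ε ≤ η s := hr s (Nat.lt_succ_self s)
          obtain ⟨hu, hw⟩ := ih (fun r h => hr r (h.trans (Nat.lt_succ_self s)))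
          obtain ⟨ha1, ha2⟩ := hkey s hs4
          obtain ⟨hm0, hm1⟩ := hmv s
          have e0 := hrec s 0
          have e1 := hrec s 1
          have hAsucc : sA η x (s + 1) = 2 * η s - sA η x s := rfl
          rcases Nat.even_or_odd s with he | ho
          · have hps : (-1 : ℝ) ^ s = 1 := he.neg_one_pow
            have hu' : z s 0 + z s 1 = sA η x s := by rw [hu, hps]; ring
            have hpos0 : 0 < H.mulVec (z s) 0 := by
              rw [hm0, hu', hw]; nlinarith
            have hpos1 : 0 < H.mulVec (z s) 1 := by
              rw [hm1, hu', hw]; nlinarith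
            rw [Real.sign_of_pos hpos0] at e0
            rw [Real.sign_of_pos hpos1] at e1
            have hps' : (-1 : ℝ) ^ (s + 1) = -1 := by rw [pow_succ, hps]; ring
            constructor
            · rw [e0, e1, hps', hAsucc]; linarith
            · rw [e0, e1]; linarith
          · have hps : (-1 : ℝ) ^ s = -1 := ho.neg_one_pow
            have hu' : z s 0 + z s 1 = -sA η x s := by rw [hu, hps]; ring
            have hneg0 : H.mulVec (z s) 0 < 0 := by
              rw [hm0, hu', hw]; nlinarith
            have hneg1 : H.mulVec (z s) 1 < 0 := by
              rw [hm1, hu', hw]; nlinarith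
            rw [Real.sign_of_neg hneg0] at e0
            rw [Real.sign_of_neg hneg1] at e1
            have hps' : (-1 : ℝ) ^ (s + 1) = 1 := by rw [pow_succ, hps]; ring
            constructor
            · rw [e0, e1, hps', hAsucc]; linarith
            · rw [e0, e1]; linarith
    by_cases hall : ∀ r, r < t → 4 * ε ≤ η r
    · exfalso
      have hw := (inv t hall).2
      have h1 : 4 * ε ≤ 2 * (κ * ε) := by nlinarith
      nlinarith [sq_nonneg (z t 0 + z t 1), hsq, h1, mul_pos hε hε, hw]
    · have hex : ∃ r, r < t ∧ η r < 4 * ε := by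
        push_neg at hall
        exact hall
      set m := Nat.find hex with hmdef
      obtain ⟨hmt, hm4⟩ := Nat.find_spec hex
      have hmmin : ∀ r, r < m → 4 * ε ≤ η r := by
        intro r hrm
        have hmin := Nat.find_min hex hrm
        push_neg at hmin
        exact hmin (by omega)
      have hwm := (inv m hmmin).2
      -- per-step bound on w = z 0 - z 1
      have hstep : ∀ r : ℕ,
          |(z (r + 1) 0 - z (r + 1) 1) - (z r 0 - z r 1)| ≤ 2 * η r := by
        intro r
        have e0 := hrec r 0
        have e1 := hrec r 1
        have heq : (z (r + 1) 0 - z (r + 1) 1) - (z r 0 - z r 1) =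
            η r * (Real.sign (H.mulVec (z r) 1) - Real.sign (H.mulVec (z r) 0)) := by
          rw [e0, e1]; ring
        rw [heq, abs_mul, abs_of_pos (hηpos r)]
        have h1 := abs_sign_le_one (H.mulVec (z r) 1)
        have h2 := abs_sign_le_one (H.mulVec (z r) 0)
        have h3 : |Real.sign (H.mulVec (z r) 1) - Real.sign (H.mulVec (z r) 0)| ≤ 2 := by
          calc |Real.sign (H.mulVec (z r) 1) - Real.sign (H.mulVec (z r) 0)|
              ≤ |Real.sign (H.mulVec (z r) 1)| + |Real.sign (H.mulVec (z r) 0)| :=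
                abs_sub _ _
            _ ≤ 2 := by linarith
        nlinarith [hηpos r]
      -- telescoping
      have htel : ∀ k : ℕ,
          |(z (m + k) 0 - z (m + k) 1) - (z m 0 - z m 1)| ≤ (k : ℝ) * (8 * ε) := by
        intro k
        induction k with
        | zero => simp
        | succ k ih =>
            have h1 := hstep (m + k)
            have hη : η (m + k) ≤ η m := hηmono m (m + k) (Nat.le_add_right _ _)
            have htri : |(z (m + (k + 1)) 0 - z (m + (k + 1)) 1) - (z m 0 - z m 1)| ≤
                |(z (m + k + 1) 0 - z (m + k + 1) 1) - (z (m + k) 0 - z (m + k) 1)| +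
                |(z (m + k) 0 - z (m + k) 1) - (z m 0 - z m 1)| := by
              rw [show m + (k + 1) = m + k + 1 from rfl]
              exact abs_sub_le _ _ _
            push_cast
            calc |(z (m + (k + 1)) 0 - z (m + (k + 1)) 1) - (z m 0 - z m 1)|
                ≤ |(z (m + k + 1) 0 - z (m + k + 1) 1) - (z (m + k) 0 - z (m + k) 1)| +
                  |(z (m + k) 0 - z (m + k) 1) - (z m 0 - z m 1)| := htri
              _ ≤ 2 * η (m + k) + (k : ℝ) * (8 * ε) := by linarith
              _ ≤ ((k : ℝ) + 1) * (8 * ε) := by nlinarith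
      have hk := htel (t - m)
      rw [show m + (t - m) = t from by omega] at hk
      have hcast : ((t - m : ℕ) : ℝ) ≤ (t : ℝ) := by
        exact_mod_cast Nat.sub_le t m
      have hzb : z t 0 - z t 1 ≤ 2 * ε := by
        nlinarith [hsq, sq_nonneg (z t 0 + z t 1)]
      have hlow : (z m 0 - z m 1) - (z t 0 - z t 1) ≤ ((t - m : ℕ) : ℝ) * (8 * ε) := by
        have := abs_le.mp hk
        linarith [this.1]
      rw [hwm] at hlow
      -- 2κε - 2ε ≤ 8ε t  ⇒  (κ-1)/4 ≤ t
      have hfin : 2 * (κ * ε) - 2 * ε ≤ (t : ℝ) * (8 * ε) := by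
        have h8 : ((t - m : ℕ) : ℝ) * (8 * ε) ≤ (t : ℝ) * (8 * ε) := by
          have h8ε : (0 : ℝ) ≤ 8 * ε := by linarith
          exact mul_le_mul_of_nonneg_right hcast h8ε
        linarith
      nlinarith [hfin, hε]
end

section
/- Let O_1, O_2 ∈ ℝ^{d×r} have orthonormal columns, with r < d. Then there exist matrices R_1, R_2 ∈ ℝ^{d×(d-r)} with orthonormal columns such that A_1 = [O_1, R_1] and A_2 = [O_2, R_2] are d×d orthogonal matrices, and ‖A_1 - A_2‖ ≤ √2·‖O_1 - O_2‖, where ‖·‖ denotes the spectral norm. -/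
open Matrix
open scoped Matrix.Norms.L2Operator

/-!
Complete `O₁` and `O₂` to orthogonal matrices `[O₁ R₁]` and `[O₂ R₂]` in any way, then replace
`R₂` by `R₂ Q`, where `Q` is the orthogonal factor of a polar decomposition of `R₁ᵀ R₂`. Now
`P = R₁ᵀ R₂` is symmetric positive semidefinite; let `s` be its least eigenvalue, with unit
eigenvector `z`. Since `xᵀ P x ≥ s ‖x‖²`, we get `‖R₁ - R₂‖² ≤ 2 - 2s`. On the other hand the
vector `y = O₂ᵀ R₁ z` satisfies `‖O₁ᵀ O₂ y‖ = s ‖y‖` (a piece of the CS decomposition of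
`[O₁ R₁]ᵀ [O₂ R₂]`), so `‖(O₁ - O₂) y‖² ≥ (2 - 2s) ‖y‖²`. Hence both column blocks of
`[O₁ R₁] - [O₂ R₂]` have norm at most `‖O₁ - O₂‖`, and the parallelogram law gives `√2`.
-/

namespace Matrix

variable {m n p : Type*}

theorem fromCols_sub_fromCols {α : Type*} [Sub α] (A₁ A₂ : Matrix m n α) (B₁ B₂ : Matrix m p α) :
    fromCols A₁ B₁ - fromCols A₂ B₂ = fromCols (A₁ - A₂) (B₁ - B₂) := by
  ext i (j | j) <;> rfl

section DotProduct

variable [Fintype m] [Fintype n] [Fintype p]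

theorem mulVec_dotProduct_mulVec {R : Type*} [CommSemiring R] (A : Matrix m n R)
    (B : Matrix m p R) (x : n → R) (y : p → R) :
    (A *ᵥ x) ⬝ᵥ (B *ᵥ y) = x ⬝ᵥ ((Aᵀ * B) *ᵥ y) := by
  rw [← mulVec_mulVec, dotProduct_transpose_mulVec, dotProduct_comm]

theorem dotProduct_self_eq_norm_sq (x : n → ℝ) :
    x ⬝ᵥ x = ‖(WithLp.toLp 2 x : EuclideanSpace ℝ n)‖ ^ 2 := by
  rw [← real_inner_self_eq_norm_sq, EuclideanSpace.inner_toLp_toLp, star_trivial]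

theorem dotProduct_self_nonneg (x : n → ℝ) : 0 ≤ x ⬝ᵥ x := by
  rw [dotProduct_self_eq_norm_sq]; positivity

theorem dotProduct_sq_le (x y : n → ℝ) : (x ⬝ᵥ y) ^ 2 ≤ (x ⬝ᵥ x) * (y ⬝ᵥ y) := by
  have := real_inner_mul_inner_self_le (WithLp.toLp 2 x : EuclideanSpace ℝ n) (WithLp.toLp 2 y)
  simp only [EuclideanSpace.inner_toLp_toLp, star_trivial] at this
  rw [dotProduct_comm y x] at this
  linarith [sq (x ⬝ᵥ y)]

end DotProduct

section L2OpNorm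

variable [Fintype m] [Fintype n] [Fintype p] [DecidableEq n] [DecidableEq p]

theorem mulVec_dotProduct_self_le (A : Matrix m n ℝ) (x : n → ℝ) :
    (A *ᵥ x) ⬝ᵥ (A *ᵥ x) ≤ ‖A‖ ^ 2 * (x ⬝ᵥ x) := by
  rw [dotProduct_self_eq_norm_sq, dotProduct_self_eq_norm_sq, ← mul_pow]
  exact pow_le_pow_left₀ (norm_nonneg _) (l2_opNorm_mulVec A (WithLp.toLp 2 x)) 2

theorem l2_opNorm_le_of_mulVec_dotProduct_self_le {A : Matrix m n ℝ} {c : ℝ} (hc : 0 ≤ c)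
    (h : ∀ x, (A *ᵥ x) ⬝ᵥ (A *ᵥ x) ≤ c ^ 2 * (x ⬝ᵥ x)) : ‖A‖ ≤ c := by
  rw [l2_opNorm_def]
  refine ContinuousLinearMap.opNorm_le_bound _ hc fun x => ?_
  show ‖WithLp.toLp 2 (A *ᵥ x.ofLp)‖ ≤ c * ‖x‖
  refine pow_le_pow_iff_left₀ (norm_nonneg _) (by positivity) two_ne_zero |>.mp ?_
  simpa only [mul_pow, dotProduct_self_eq_norm_sq, WithLp.toLp_ofLp] using h x.ofLp

theorem l2_opNorm_fromCols_le {A : Matrix m n ℝ} {B : Matrix m p ℝ} {c : ℝ}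
    (hA : ‖A‖ ≤ c) (hB : ‖B‖ ≤ c) : ‖fromCols A B‖ ≤ √2 * c := by
  have hc : 0 ≤ c := (norm_nonneg _).trans hA
  refine l2_opNorm_le_of_mulVec_dotProduct_self_le (by positivity) fun x => ?_
  obtain ⟨x₁, x₂, rfl⟩ : ∃ x₁ x₂, x = Sum.elim x₁ x₂ := ⟨_, _, (Sum.elim_comp_inl_inr x).symm⟩
  set a := A *ᵥ x₁
  set b := B *ᵥ x₂
  have parallelogram : (a + b) ⬝ᵥ (a + b) + (a - b) ⬝ᵥ (a - b) = 2 * (a ⬝ᵥ a + b ⬝ᵥ b) := by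
    simp only [add_dotProduct, dotProduct_add, sub_dotProduct, dotProduct_sub, dotProduct_comm b a]
    ring
  have hc2 : ‖A‖ ^ 2 ≤ c ^ 2 ∧ ‖B‖ ^ 2 ≤ c ^ 2 :=
    ⟨pow_le_pow_left₀ (norm_nonneg _) hA 2, pow_le_pow_left₀ (norm_nonneg _) hB 2⟩
  rw [fromCols_mulVec_sumElim, sumElim_dotProduct_sumElim, mul_pow, Real.sq_sqrt zero_le_two]
  nlinarith [dotProduct_self_nonneg (a - b), mulVec_dotProduct_self_le A x₁,
    mulVec_dotProduct_self_le B x₂, dotProduct_self_nonneg x₁, dotProduct_self_nonneg x₂]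

theorem sub_mulVec_dotProduct_self {A B : Matrix m n ℝ} (hA : Aᵀ * A = 1) (hB : Bᵀ * B = 1)
    (x : n → ℝ) :
    ((A - B) *ᵥ x) ⬝ᵥ ((A - B) *ᵥ x) = 2 * (x ⬝ᵥ x) - 2 * (x ⬝ᵥ ((Aᵀ * B) *ᵥ x)) := by
  have hBA : x ⬝ᵥ ((Bᵀ * A) *ᵥ x) = x ⬝ᵥ ((Aᵀ * B) *ᵥ x) := by
    rw [← transpose_transpose A, ← transpose_mul, dotProduct_transpose_mulVec, transpose_transpose]
  rw [mulVec_dotProduct_mulVec, transpose_sub, Matrix.sub_mul, Matrix.mul_sub, Matrix.mul_sub,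
    hA, hB]
  simp only [sub_mulVec, one_mulVec, dotProduct_sub, hBA]
  ring

theorem l2_opNorm_sub_le_of_le_dotProduct [DecidableEq m] {A B : Matrix m n ℝ} (hA : Aᵀ * A = 1)
    (hB : Bᵀ * B = 1) {s c : ℝ} (hAB : ∀ x, s * (x ⬝ᵥ x) ≤ x ⬝ᵥ ((Aᵀ * B) *ᵥ x))
    (hc : 0 ≤ c) (hsc : 2 - 2 * s ≤ c ^ 2) : ‖A - B‖ ≤ c := by
  refine l2_opNorm_le_of_mulVec_dotProduct_self_le hc fun x => ?_
  rw [sub_mulVec_dotProduct_self hA hB]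
  nlinarith [hAB x, dotProduct_self_nonneg x]

theorem two_sub_two_mul_le_l2_opNorm_sub_sq {A B : Matrix m n ℝ} (hA : Aᵀ * A = 1)
    (hB : Bᵀ * B = 1) {s : ℝ} {y : n → ℝ} (hy : 0 < y ⬝ᵥ y)
    (hAB : y ⬝ᵥ ((Aᵀ * B) *ᵥ y) ≤ s * (y ⬝ᵥ y)) : 2 - 2 * s ≤ ‖A - B‖ ^ 2 := by
  have h := mulVec_dotProduct_self_le (A - B) y
  rw [sub_mulVec_dotProduct_self hA hB] at h
  nlinarith

end L2OpNorm

section Orthonormal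

variable [Fintype m]

theorem fromCols_transpose_mul_self_eq_one_iff {α : Type*} [CommRing α] [DecidableEq n]
    [DecidableEq p] {O : Matrix m n α} {Q : Matrix m p α} :
    (fromCols O Q)ᵀ * fromCols O Q = 1 ↔ Oᵀ * O = 1 ∧ Qᵀ * Q = 1 ∧ Oᵀ * Q = 0 := by
  rw [transpose_fromCols, fromRows_mul_fromCols, ← fromBlocks_one, fromBlocks_inj]
  constructor
  · rintro ⟨hO, hOQ, -, hQ⟩
    exact ⟨hO, hQ, hOQ⟩
  · rintro ⟨hO, hQ, hOQ⟩
    refine ⟨hO, hOQ, ?_, hQ⟩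
    rw [← transpose_transpose O, ← transpose_mul, hOQ, transpose_zero]

theorem fromCols_mul_transpose_mul_self_eq_one [Fintype p] [DecidableEq n] [DecidableEq p]
    {O : Matrix m n ℝ} {Q : Matrix m p ℝ} {U : Matrix p p ℝ}
    (h : (fromCols O Q)ᵀ * fromCols O Q = 1) (hU : Uᵀ * U = 1) :
    (fromCols O (Q * U))ᵀ * fromCols O (Q * U) = 1 := by
  obtain ⟨hO, hQ, hOQ⟩ := fromCols_transpose_mul_self_eq_one_iff.mp h
  refine fromCols_transpose_mul_self_eq_one_iff.mpr ⟨hO, ?_, ?_⟩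
  · rw [transpose_mul, Matrix.mul_assoc, ← Matrix.mul_assoc Qᵀ, hQ, Matrix.one_mul, hU]
  · rw [← Matrix.mul_assoc, hOQ, Matrix.zero_mul]

variable [Fintype n] [Fintype p]

theorem mul_transpose_add_mul_transpose_eq_one [DecidableEq m] [DecidableEq n] [DecidableEq p]
    {O : Matrix m n ℝ} {Q : Matrix m p ℝ}
    (hcard : Fintype.card n + Fintype.card p = Fintype.card m)
    (h : (fromCols O Q)ᵀ * fromCols O Q = 1) : O * Oᵀ + Q * Qᵀ = 1 := by
  have hcard' : Fintype.card (n ⊕ p) = Fintype.card m := by simpa using hcard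
  rwa [mul_eq_one_comm_of_card_eq (R := ℝ) (eq := hcard'), transpose_fromCols,
    fromCols_mul_fromRows] at h

theorem exists_transpose_mul_self_eq_one_of_orthonormal_on {ι : Type*} [Fintype ι]
    [DecidableEq ι] (hcard : Fintype.card ι = Fintype.card m) (v : ι → m → ℝ) {s : Set ι}
    (hv : ∀ i ∈ s, ∀ j ∈ s, v i ⬝ᵥ v j = if i = j then 1 else 0) :
    ∃ B : Matrix m ι ℝ, Bᵀ * B = 1 ∧ ∀ i ∈ s, Bᵀ i = v i := by
  let e : ι → EuclideanSpace ℝ m := fun i => WithLp.toLp 2 (v i)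
  have he : Orthonormal ℝ (s.domRestrict e) := by
    rw [orthonormal_iff_ite]
    rintro ⟨i, hi⟩ ⟨j, hj⟩
    show inner ℝ (e i) (e j) = _
    simp [e, EuclideanSpace.inner_toLp_toLp, dotProduct_comm, hv i hi j hj, Subtype.ext_iff]
  obtain ⟨b, hb⟩ := he.exists_orthonormalBasis_extension_of_card_eq (by simpa using hcard.symm)
  refine ⟨of fun k i => b i k, ?_, fun i hi => ?_⟩
  · ext i j
    simpa [mul_apply, one_apply, EuclideanSpace.inner_eq_star_dotProduct, dotProduct,
      mul_comm] using orthonormal_iff_ite.mp b.orthonormal i j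
  · ext k
    simp [hb i hi, e]

theorem exists_fromCols_transpose_mul_self_eq_one [DecidableEq n] [DecidableEq p]
    {O : Matrix m n ℝ} (hO : Oᵀ * O = 1)
    (hcard : Fintype.card n + Fintype.card p = Fintype.card m) :
    ∃ Q : Matrix m p ℝ, (fromCols O Q)ᵀ * fromCols O Q = 1 := by
  obtain ⟨B, hB, hBO⟩ := exists_transpose_mul_self_eq_one_of_orthonormal_on
    (by simpa using hcard) (Sum.elim (fun i k => O k i) (0 : p → m → ℝ))
    (s := Set.range Sum.inl) (by
      rintro _ ⟨i, rfl⟩ _ ⟨j, rfl⟩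
      simp only [Sum.elim_inl]
      simpa [one_apply, mul_apply, dotProduct] using congrFun (congrFun hO i) j)
  have hBO' : fromCols O (B.submatrix id Sum.inr) = B := by
    ext k (i | i)
    · simpa using (congrFun (hBO (Sum.inl i) ⟨i, rfl⟩) k).symm
    · rfl
  exact ⟨B.submatrix id Sum.inr, hBO' ▸ hB⟩

end Orthonormal

section SingularValueDecomposition

variable [Fintype m] [Fintype n]

theorem exists_eq_mul_diagonal_of_transpose_mul_self_eq_diagonal [DecidableEq n]
    (hcard : Fintype.card n = Fintype.card m) {B : Matrix m n ℝ} {g : n → ℝ}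
    (hB : Bᵀ * B = diagonal (g ^ 2)) : ∃ W : Matrix m n ℝ, Wᵀ * W = 1 ∧ B = W * diagonal g := by
  have hcol : ∀ i j, Bᵀ i ⬝ᵥ Bᵀ j = if i = j then g i ^ 2 else 0 := fun i j => by
    simpa [mul_apply, diagonal_apply, dotProduct] using congrFun (congrFun hB i) j
  obtain ⟨W, hW, hWB⟩ := exists_transpose_mul_self_eq_one_of_orthonormal_on hcard
    (fun i => (g i)⁻¹ • Bᵀ i) (s := {i | g i ≠ 0}) fun i hi j hj => by
      rw [smul_dotProduct, dotProduct_smul, hcol]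
      split_ifs with hij
      · subst hij
        have hi : g i ≠ 0 := hi
        simp only [smul_eq_mul]
        field_simp
      · simp
  refine ⟨W, hW, ?_⟩
  ext k j
  rw [mul_diagonal]
  by_cases hj : g j = 0
  · have : Bᵀ j = 0 := dotProduct_self_eq_zero.mp (by simp [hcol, hj])
    simpa [hj] using congrFun this k
  · have := congrFun (hWB j hj) k
    simp only [transpose_apply, Pi.smul_apply, smul_eq_mul] at this
    rw [this]
    field_simp [hj]

theorem exists_svd [DecidableEq n] (K : Matrix n n ℝ) :
    ∃ U W : Matrix n n ℝ, ∃ g : n → ℝ,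
      Uᵀ * U = 1 ∧ Wᵀ * W = 1 ∧ 0 ≤ g ∧ K = W * diagonal g * Uᵀ := by
  have hK : (Kᵀ * K).PosSemidef := by
    simpa using posSemidef_conjTranspose_mul_self K
  set U : Matrix n n ℝ := (hK.1.eigenvectorUnitary : Matrix n n ℝ)
  set e := hK.1.eigenvalues
  have hU : Uᵀ * U = 1 := by
    simpa [star_eq_conjTranspose] using
      (mem_unitaryGroup_iff').mp hK.1.eigenvectorUnitary.2
  have hspec : Uᵀ * (Kᵀ * K) * U = diagonal e := by
    simpa [star_eq_conjTranspose] using hK.1.conjStarAlgAut_star_eigenvectorUnitary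
  have hdiag : (K * U)ᵀ * (K * U) = diagonal ((fun i => √(e i)) ^ 2) := by
    rw [transpose_mul, Matrix.mul_assoc, ← Matrix.mul_assoc Kᵀ, ← Matrix.mul_assoc, hspec]
    congr
    ext i
    simp [Real.sq_sqrt (hK.eigenvalues_nonneg i), e]
  obtain ⟨W, hW, hKU⟩ := exists_eq_mul_diagonal_of_transpose_mul_self_eq_diagonal rfl hdiag
  refine ⟨U, W, _, hU, hW, fun i => Real.sqrt_nonneg (e i), ?_⟩
  rw [← hKU, Matrix.mul_assoc, mul_eq_one_comm.mp hU, Matrix.mul_one]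

theorem exists_polar_decomposition [DecidableEq n] (K : Matrix n n ℝ) :
    ∃ Q W : Matrix n n ℝ, ∃ g : n → ℝ,
      Qᵀ * Q = 1 ∧ Wᵀ * W = 1 ∧ 0 ≤ g ∧ K * Q = W * diagonal g * Wᵀ := by
  obtain ⟨U, W, g, hU, hW, hg, rfl⟩ := exists_svd K
  refine ⟨U * Wᵀ, W, g, ?_, hW, hg, ?_⟩
  · rw [transpose_mul, transpose_transpose, Matrix.mul_assoc, ← Matrix.mul_assoc Uᵀ, hU,
      Matrix.one_mul, mul_eq_one_comm.mp hW]
  · rw [Matrix.mul_assoc, ← Matrix.mul_assoc Uᵀ, hU, Matrix.one_mul]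

theorem mul_dotProduct_self_le_dotProduct_conj_diagonal_mulVec [DecidableEq n]
    {W : Matrix n n ℝ} (hW : W * Wᵀ = 1) {g : n → ℝ} {s : ℝ} (hs : ∀ i, s ≤ g i) (x : n → ℝ) :
    s * (x ⬝ᵥ x) ≤ x ⬝ᵥ ((W * diagonal g * Wᵀ) *ᵥ x) := by
  set y := Wᵀ *ᵥ x
  have hx : x ⬝ᵥ x = y ⬝ᵥ y := by
    rw [mulVec_dotProduct_mulVec, transpose_transpose, hW, one_mulVec]
  have hxy : x ⬝ᵥ ((W * diagonal g * Wᵀ) *ᵥ x) = y ⬝ᵥ (diagonal g *ᵥ y) := by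
    rw [mulVec_mulVec, mulVec_dotProduct_mulVec, transpose_transpose, Matrix.mul_assoc]
  rw [hx, hxy]
  simp only [dotProduct, mulVec_diagonal, Finset.mul_sum]
  exact Finset.sum_le_sum fun i _ => by nlinarith [hs i, mul_self_nonneg (y i)]

theorem conj_diagonal_mulVec_mulVec_single [DecidableEq n] {W : Matrix n n ℝ}
    (hW : Wᵀ * W = 1) (g : n → ℝ) (i : n) :
    (W * diagonal g * Wᵀ) *ᵥ (W *ᵥ Pi.single i 1) = g i • (W *ᵥ Pi.single i 1) := by
  rw [mulVec_mulVec, Matrix.mul_assoc, hW, Matrix.mul_one, ← mulVec_mulVec,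
    diagonal_mulVec_single, mul_one, ← mulVec_smul, ← Pi.single_smul, smul_eq_mul, mul_one]

theorem exists_polar_with_min_eigenvector [DecidableEq n] [Nonempty n] (K : Matrix n n ℝ) :
    ∃ Q : Matrix n n ℝ, Qᵀ * Q = 1 ∧ (K * Q).IsSymm ∧ ∃ (s : ℝ) (z : n → ℝ), 0 ≤ s ∧
      z ⬝ᵥ z = 1 ∧ (K * Q) *ᵥ z = s • z ∧ ∀ x, s * (x ⬝ᵥ x) ≤ x ⬝ᵥ ((K * Q) *ᵥ x) := by
  obtain ⟨Q, W, g, hQ, hW, hg, hKQ⟩ := exists_polar_decomposition K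
  obtain ⟨i, hi⟩ := Finite.exists_min g
  refine ⟨Q, hQ, ?_, g i, W *ᵥ Pi.single i 1, hg i, ?_, ?_, ?_⟩
  · rw [hKQ, IsSymm, transpose_mul, transpose_mul, transpose_transpose, diagonal_transpose,
      Matrix.mul_assoc]
  · rw [mulVec_dotProduct_mulVec, hW, one_mulVec]
    simp
  · rw [hKQ, conj_diagonal_mulVec_mulVec_single hW]
  · rw [hKQ]
    exact mul_dotProduct_self_le_dotProduct_conj_diagonal_mulVec (mul_eq_one_comm.mp hW) hi

end SingularValueDecomposition

section PrincipalAngles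

variable [Fintype m] [Fintype n] [Fintype p] [DecidableEq n] [DecidableEq p]

/-- The hypotheses on `M`, `Y`, `P` hold for the blocks of an orthogonal matrix `!![M, X; Y, P]`.
The witness is `y = Yᵀ z`, for which `‖M y‖ = s ‖y‖`. -/
theorem exists_dotProduct_mulVec_le_of_mulVec_eq_smul {M : Matrix n n ℝ} {Y : Matrix p n ℝ}
    {P : Matrix p p ℝ} (hMY : Mᵀ * M + Yᵀ * Y = 1) (hYP : Y * Yᵀ + P * Pᵀ = 1) (hP : P.IsSymm)
    {z : p → ℝ} {s : ℝ} (hz : z ⬝ᵥ z = 1) (hPz : P *ᵥ z = s • z) (hs₀ : 0 ≤ s) (hs₁ : s < 1) :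
    ∃ y : n → ℝ, 0 < y ⬝ᵥ y ∧ y ⬝ᵥ (M *ᵥ y) ≤ s * (y ⬝ᵥ y) := by
  set y := Yᵀ *ᵥ z
  have hYy : Y *ᵥ y = (1 - s ^ 2) • z := by
    rw [mulVec_mulVec, eq_sub_of_add_eq hYP, sub_mulVec, one_mulVec, ← mulVec_mulVec, hP.eq, hPz,
      mulVec_smul, hPz, smul_smul, sub_smul, one_smul, sq]
  have hyy : y ⬝ᵥ y = 1 - s ^ 2 := by
    rw [dotProduct_transpose_mulVec, hYy, dotProduct_smul, hz, smul_eq_mul, mul_one]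
  have hYY : (Y *ᵥ y) ⬝ᵥ (Y *ᵥ y) = (1 - s ^ 2) ^ 2 := by
    rw [hYy, smul_dotProduct, dotProduct_smul, hz, smul_eq_mul, smul_eq_mul]
    ring
  have hMy : (M *ᵥ y) ⬝ᵥ (M *ᵥ y) = (1 - s ^ 2) * s ^ 2 := by
    rw [mulVec_dotProduct_mulVec, eq_sub_of_add_eq hMY, sub_mulVec, one_mulVec, dotProduct_sub,
      ← mulVec_dotProduct_mulVec, hYY, hyy]
    ring
  refine ⟨y, by nlinarith, ?_⟩
  have hcs : (y ⬝ᵥ (M *ᵥ y)) ^ 2 ≤ (s * (y ⬝ᵥ y)) ^ 2 := by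
    calc _ ≤ (y ⬝ᵥ y) * ((M *ᵥ y) ⬝ᵥ (M *ᵥ y)) := dotProduct_sq_le _ _
      _ = _ := by rw [hMy, hyy]; ring
  exact (abs_le_of_sq_le_sq' hcs (by nlinarith)).2

theorem two_sub_two_mul_le_l2_opNorm_sub_sq_of_fromCols [DecidableEq m]
    (hcard : Fintype.card n + Fintype.card p = Fintype.card m)
    {O₁ O₂ : Matrix m n ℝ} {R₁ R₂ : Matrix m p ℝ}
    (hA₁ : (fromCols O₁ R₁)ᵀ * fromCols O₁ R₁ = 1) (hA₂ : (fromCols O₂ R₂)ᵀ * fromCols O₂ R₂ = 1)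
    (hP : (R₁ᵀ * R₂).IsSymm) {z : p → ℝ} {s : ℝ} (hz : z ⬝ᵥ z = 1)
    (hPz : (R₁ᵀ * R₂) *ᵥ z = s • z) (hs : 0 ≤ s) : 2 - 2 * s ≤ ‖O₁ - O₂‖ ^ 2 := by
  rcases lt_or_ge s 1 with hs₁ | hs₁
  swap
  · nlinarith [sq_nonneg ‖O₁ - O₂‖]
  obtain ⟨hO₁, hR₁, -⟩ := fromCols_transpose_mul_self_eq_one_iff.mp hA₁
  obtain ⟨hO₂, -, -⟩ := fromCols_transpose_mul_self_eq_one_iff.mp hA₂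
  have hMY : (O₁ᵀ * O₂)ᵀ * (O₁ᵀ * O₂) + (R₁ᵀ * O₂)ᵀ * (R₁ᵀ * O₂) = 1 := calc
    _ = O₂ᵀ * (O₁ * O₁ᵀ + R₁ * R₁ᵀ) * O₂ := by
      simp only [transpose_mul, transpose_transpose, Matrix.mul_add, Matrix.add_mul,
        Matrix.mul_assoc]
    _ = 1 := by rw [mul_transpose_add_mul_transpose_eq_one hcard hA₁, Matrix.mul_one, hO₂]
  have hYP : (R₁ᵀ * O₂) * (R₁ᵀ * O₂)ᵀ + (R₁ᵀ * R₂) * (R₁ᵀ * R₂)ᵀ = 1 := calc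
    _ = R₁ᵀ * (O₂ * O₂ᵀ + R₂ * R₂ᵀ) * R₁ := by
      simp only [transpose_mul, transpose_transpose, Matrix.mul_add, Matrix.add_mul,
        Matrix.mul_assoc]
    _ = 1 := by rw [mul_transpose_add_mul_transpose_eq_one hcard hA₂, Matrix.mul_one, hR₁]
  obtain ⟨y, hy, hMy⟩ := exists_dotProduct_mulVec_le_of_mulVec_eq_smul hMY hYP hP hz hPz hs hs₁
  exact two_sub_two_mul_le_l2_opNorm_sub_sq hO₁ hO₂ hy hMy

end PrincipalAngles

end Matrix

/-- Orthonormal completion with controlled spectral-norm distance: two `d×r` matrices with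
orthonormal columns (`r < d`) can be completed to `d×d` orthogonal matrices whose
spectral-norm distance is at most `√2` times that of the original matrices. -/
theorem stmt17 (d r : ℕ) (hrd : r < d)
    (O₁ O₂ : Matrix (Fin d) (Fin r) ℝ)
    (h₁ : O₁ᵀ * O₁ = 1) (h₂ : O₂ᵀ * O₂ = 1) :
    ∃ R₁ R₂ : Matrix (Fin d) (Fin (d - r)) ℝ,
      (Matrix.fromCols O₁ R₁)ᵀ * Matrix.fromCols O₁ R₁ = 1 ∧
        (Matrix.fromCols O₂ R₂)ᵀ * Matrix.fromCols O₂ R₂ = 1 ∧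
        ‖Matrix.fromCols O₁ R₁ - Matrix.fromCols O₂ R₂‖ ≤ Real.sqrt 2 * ‖O₁ - O₂‖ := by
  have hcard : Fintype.card (Fin r) + Fintype.card (Fin (d - r)) = Fintype.card (Fin d) := by
    simp only [Fintype.card_fin]
    omega
  have : Nonempty (Fin (d - r)) := ⟨⟨0, by omega⟩⟩
  obtain ⟨R₁, hA₁⟩ := exists_fromCols_transpose_mul_self_eq_one h₁ hcard
  obtain ⟨R₂, hA₂⟩ := exists_fromCols_transpose_mul_self_eq_one h₂ hcard
  obtain ⟨Q, hQ, hP, s, z, hs, hz, hPz, hPmin⟩ := exists_polar_with_min_eigenvector (R₁ᵀ * R₂)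
  rw [Matrix.mul_assoc] at hP hPz hPmin
  have hA₂Q := fromCols_mul_transpose_mul_self_eq_one hA₂ hQ
  have hO := two_sub_two_mul_le_l2_opNorm_sub_sq_of_fromCols hcard hA₁ hA₂Q hP hz hPz hs
  have hR : ‖R₁ - R₂ * Q‖ ≤ ‖O₁ - O₂‖ :=
    l2_opNorm_sub_le_of_le_dotProduct (fromCols_transpose_mul_self_eq_one_iff.mp hA₁).2.1
      (fromCols_transpose_mul_self_eq_one_iff.mp hA₂Q).2.1 hPmin (norm_nonneg _) hO
  refine ⟨R₁, R₂ * Q, hA₁, hA₂Q, ?_⟩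
  rw [fromCols_sub_fromCols]
  exact l2_opNorm_fromCols_le le_rfl hR
end
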